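/- Under the standing assumptions (α ∈ (1/3,1/2), α-Hölder rough path 𝐗 defined on [0, τ + τ'], monotone family of interpolation spaces, analytic semigroup with scale bounds, F satisfying (F), G satisfying (G)), suppose (y¹, G(y¹)) ∈ D^{2α}_{X,γ}([0,τ]) solves the rough evolution equation on [0,τ] with initial datum y₀, and (y², G(y²)) ∈ D^{2α}_{X̃,γ}([0,τ']) solves it on [0,τ'] with initial datum y¹_τ, driven by the time-shifted rough path X̃ with X̃_t = X_{τ+t} − X_τ and X̃⁽²⁾_{s,t} = X⁽²⁾_{τ+s,τ+t}. Then the concatenation y_t := y¹_t for t ∈ [0,τ] and y_t := y²_{t−τ} for t ∈ [τ, τ+τ'] defines a solution (y, G(y)) ∈ D^{2α}_{X,γ}([0, τ+τ']) of the rough evolution equation on [0, τ+τ'] with initial datum y₀. -/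
import Mathlib


open Set

/-- A monotone family of interpolation spaces: a scale `(B_θ)_{θ ∈ ℝ}` of separable Banach
spaces realised inside a common ambient real vector space `E`; `Mem θ x` means `x ∈ B_θ`,
`N θ x` denotes the norm `|x|_θ`.  For `β₁ ≤ β₂` the space `B_{β₂}` is contained in `B_{β₁}`
with dense and continuous embedding, and the interpolation inequality holds. -/
structure BanachScale where
  E : Type
  [inst_add : AddCommGroup E]
  [inst_mod : Module ℝ E]
  Mem : ℝ → E → Prop
  N : ℝ → E → ℝ
  mem_zero : ∀ θ : ℝ, Mem θ 0
  mem_add : ∀ (θ : ℝ) (x y : E), Mem θ x → Mem θ y → Mem θ (x + y)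
  mem_neg : ∀ (θ : ℝ) (x : E), Mem θ x → Mem θ (-x)
  mem_smul : ∀ (θ c : ℝ) (x : E), Mem θ x → Mem θ (c • x)
  N_nonneg : ∀ (θ : ℝ) (x : E), 0 ≤ N θ x
  N_zero : ∀ θ : ℝ, N θ 0 = 0
  N_eq_zero : ∀ (θ : ℝ) (x : E), Mem θ x → N θ x = 0 → x = 0
  N_add : ∀ (θ : ℝ) (x y : E), Mem θ x → Mem θ y → N θ (x + y) ≤ N θ x + N θ y
  N_smul : ∀ (θ c : ℝ) (x : E), N θ (c • x) = |c| * N θ x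
  mem_mono : ∀ ⦃β₁ β₂ : ℝ⦄, β₁ ≤ β₂ → ∀ x : E, Mem β₂ x → Mem β₁ x
  embed_bound : ∀ ⦃β₁ β₂ : ℝ⦄, β₁ ≤ β₂ → ∃ C > (0:ℝ), ∀ x : E, Mem β₂ x → N β₁ x ≤ C * N β₂ x
  embed_dense : ∀ ⦃β₁ β₂ : ℝ⦄, β₁ ≤ β₂ → ∀ x : E, Mem β₁ x → ∀ ε > (0:ℝ),
    ∃ y : E, Mem β₂ y ∧ N β₁ (x - y) < ε
  complete : ∀ (θ : ℝ) (u : ℕ → E), (∀ n, Mem θ (u n)) →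
    (∀ ε > (0:ℝ), ∃ M : ℕ, ∀ m ≥ M, ∀ n ≥ M, N θ (u m - u n) < ε) →
    ∃ x : E, Mem θ x ∧ ∀ ε > (0:ℝ), ∃ M : ℕ, ∀ n ≥ M, N θ (u n - x) < ε
  separable : ∀ θ : ℝ, ∃ D : Set E, D.Countable ∧ (∀ x ∈ D, Mem θ x) ∧
    ∀ x : E, Mem θ x → ∀ ε > (0:ℝ), ∃ y ∈ D, N θ (x - y) < ε
  interp : ∀ ⦃θ β γ : ℝ⦄, θ ≤ β → β ≤ γ → ∃ C > (0:ℝ), ∀ x : E, Mem γ x →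
    N β x ^ (γ - θ) ≤ C * (N θ x ^ (γ - β) * N γ x ^ (β - θ))

attribute [instance] BanachScale.inst_add BanachScale.inst_mod

/-- An analytic `C₀`-semigroup `(S(t))_{t ≥ 0}` acting on a scale of Banach spaces,
together with the standard parabolic bounds
`|(S(t) - Id)x|_η ≲ t^σ |x|_{η+σ}` and `|S(t)x|_{η+σ} ≲ t^{-σ} |x|_η` for `σ ∈ [0,1]`,
with constants uniform on compact time intervals. -/
structure ScaleSemigroup (𝓑 : BanachScale) where
  S : ℝ → 𝓑.E →ₗ[ℝ] 𝓑.E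
  S_id : ∀ x : 𝓑.E, S 0 x = x
  S_comp : ∀ s t : ℝ, 0 ≤ s → 0 ≤ t → ∀ x : 𝓑.E, S (s + t) x = S s (S t x)
  S_mem : ∀ (t θ : ℝ) (x : 𝓑.E), 0 ≤ t → 𝓑.Mem θ x → 𝓑.Mem θ (S t x)
  S_bounded : ∀ θ Tm : ℝ, 0 < Tm → ∃ C > (0:ℝ), ∀ (t : ℝ) (x : 𝓑.E), 0 ≤ t → t ≤ Tm →
    𝓑.Mem θ x → 𝓑.N θ (S t x) ≤ C * 𝓑.N θ x
  S_strong_cont : ∀ (θ : ℝ) (x : 𝓑.E), 𝓑.Mem θ x → ∀ ε > (0:ℝ), ∃ δ > (0:ℝ),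
    ∀ t : ℝ, 0 < t → t < δ → 𝓑.N θ (S t x - x) < ε
  S_smoothing : ∀ η σ Tm : ℝ, 0 ≤ σ → σ ≤ 1 → 0 < Tm → ∃ C > (0:ℝ),
    ∀ (t : ℝ) (x : 𝓑.E), 0 < t → t ≤ Tm → 𝓑.Mem η x →
      𝓑.Mem (η + σ) (S t x) ∧ 𝓑.N (η + σ) (S t x) ≤ C * t ^ (-σ) * 𝓑.N η x
  S_holdId : ∀ η σ Tm : ℝ, 0 ≤ σ → σ ≤ 1 → 0 < Tm → ∃ C > (0:ℝ),
    ∀ (t : ℝ) (x : 𝓑.E), 0 < t → t ≤ Tm → 𝓑.Mem (η + σ) x →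
      𝓑.N η (S t x - x) ≤ C * t ^ σ * 𝓑.N (η + σ) x

/-- A (one-dimensional) `α`-Hölder rough path `𝐗 = (X, X⁽²⁾)` on `[0,T]`:
`X ∈ C^α`, `X₀ = 0`, `X⁽²⁾ ∈ C^{2α}` on the simplex, satisfying Chen's relation. -/
structure RoughPath (α T : ℝ) where
  X : ℝ → ℝ
  X2 : ℝ → ℝ → ℝ
  X_zero : X 0 = 0
  holderX : ∃ C : ℝ, ∀ s t : ℝ, 0 ≤ s → s ≤ t → t ≤ T → |X t - X s| ≤ C * (t - s) ^ α
  holderX2 : ∃ C : ℝ, ∀ s t : ℝ, 0 ≤ s → s ≤ t → t ≤ T → |X2 s t| ≤ C * (t - s) ^ (2 * α)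
  chen : ∀ s u t : ℝ, 0 ≤ s → s ≤ u → u ≤ t → t ≤ T →
    X2 s t - X2 s u - X2 u t = (X u - X s) * (X t - X u)

/-- The supremum norm `‖f‖_{∞, B_θ}` over `[0,T]`. -/
noncomputable def scaleSupNorm (𝓑 : BanachScale) (θ T : ℝ) (f : ℝ → 𝓑.E) : ℝ :=
  sSup {r : ℝ | ∃ t : ℝ, 0 ≤ t ∧ t ≤ T ∧ r = 𝓑.N θ (f t)}

/-- The `η`-Hölder seminorm (in `B_θ`) of a two-parameter function on `[0,T]`. -/
noncomputable def scaleHolderNorm2 (𝓑 : BanachScale) (θ η T : ℝ) (F : ℝ → ℝ → 𝓑.E) : ℝ :=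
  sSup {r : ℝ | ∃ s t : ℝ, 0 ≤ s ∧ s < t ∧ t ≤ T ∧ r = 𝓑.N θ (F s t) / (t - s) ^ η}

/-- The `η`-Hölder seminorm `‖f‖_{η, B_θ}` over `[0,T]`. -/
noncomputable def scaleHolderNorm (𝓑 : BanachScale) (θ η T : ℝ) (f : ℝ → 𝓑.E) : ℝ :=
  scaleHolderNorm2 𝓑 θ η T fun s t => f t - f s

/-- The `η`-Hölder seminorm of a real-valued path on `[0,T]`. -/
noncomputable def realHolderNorm (η T : ℝ) (X : ℝ → ℝ) : ℝ :=
  sSup {r : ℝ | ∃ s t : ℝ, 0 ≤ s ∧ s < t ∧ t ≤ T ∧ r = |X t - X s| / (t - s) ^ η}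

/-- `f : [0,T] → B_θ` is `η`-Hölder continuous. -/
def IsHolderOn (𝓑 : BanachScale) (θ η T : ℝ) (f : ℝ → 𝓑.E) : Prop :=
  ∃ C : ℝ, ∀ s t : ℝ, 0 ≤ s → s ≤ t → t ≤ T → 𝓑.N θ (f t - f s) ≤ C * (t - s) ^ η

/-- The remainder `R^y_{s,t} = y_t - y_s - y'_s X_{s,t}` of a controlled rough path. -/
def gubRemainder (𝓑 : BanachScale) (X : ℝ → ℝ) (y y' : ℝ → 𝓑.E) (s t : ℝ) : 𝓑.E :=
  y t - y s - (X t - X s) • y' s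

/-- `(y, y')` is a controlled rough path in `D^{2α}_{X,γ}([0,T])`:
`y ∈ C([0,T]; B_γ)`, `y' ∈ C([0,T]; B_{γ-α}) ∩ C^α([0,T]; B_{γ-2α})` and the remainder
`R^y ∈ C^α([0,T]; B_{γ-α}) ∩ C^{2α}([0,T]; B_{γ-2α})`. -/
structure IsControlledPath (𝓑 : BanachScale) (α γ T : ℝ) (X : ℝ → ℝ)
    (y y' : ℝ → 𝓑.E) : Prop where
  mem_y : ∀ t : ℝ, 0 ≤ t → t ≤ T → 𝓑.Mem γ (y t)
  mem_y' : ∀ t : ℝ, 0 ≤ t → t ≤ T → 𝓑.Mem (γ - α) (y' t)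
  cont_y : ∀ t : ℝ, 0 ≤ t → t ≤ T → ∀ ε > (0:ℝ), ∃ δ > (0:ℝ), ∀ s : ℝ, 0 ≤ s → s ≤ T →
    |s - t| < δ → 𝓑.N γ (y s - y t) < ε
  cont_y' : ∀ t : ℝ, 0 ≤ t → t ≤ T → ∀ ε > (0:ℝ), ∃ δ > (0:ℝ), ∀ s : ℝ, 0 ≤ s → s ≤ T →
    |s - t| < δ → 𝓑.N (γ - α) (y' s - y' t) < ε
  holder_y' : ∃ C : ℝ, ∀ s t : ℝ, 0 ≤ s → s ≤ t → t ≤ T →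
    𝓑.N (γ - 2 * α) (y' t - y' s) ≤ C * (t - s) ^ α
  rem_alpha : ∃ C : ℝ, ∀ s t : ℝ, 0 ≤ s → s ≤ t → t ≤ T →
    𝓑.N (γ - α) (gubRemainder 𝓑 X y y' s t) ≤ C * (t - s) ^ α
  rem_two_alpha : ∃ C : ℝ, ∀ s t : ℝ, 0 ≤ s → s ≤ t → t ≤ T →
    𝓑.N (γ - 2 * α) (gubRemainder 𝓑 X y y' s t) ≤ C * (t - s) ^ (2 * α)

/-- The norm `‖(y,y')‖_{X,2α,γ}` on `D^{2α}_{X,γ}([0,T])`. -/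
noncomputable def crpNorm (𝓑 : BanachScale) (α γ T : ℝ) (X : ℝ → ℝ)
    (y y' : ℝ → 𝓑.E) : ℝ :=
  scaleSupNorm 𝓑 γ T y + scaleSupNorm 𝓑 (γ - α) T y'
    + scaleHolderNorm 𝓑 (γ - 2 * α) α T y'
    + scaleHolderNorm2 𝓑 (γ - α) α T (gubRemainder 𝓑 X y y')
    + scaleHolderNorm2 𝓑 (γ - 2 * α) (2 * α) T (gubRemainder 𝓑 X y y')

/-- A partition `a = t_0 < t_1 < ⋯ < t_n = b` of the interval `[a,b]`. -/
structure RPartition (a b : ℝ) where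
  n : ℕ
  t : ℕ → ℝ
  n_pos : 0 < n
  strict : ∀ i : ℕ, i < n → t i < t (i + 1)
  first : t 0 = a
  last : t n = b

/-- The mesh `|π|` of a partition. -/
noncomputable def RPartition.mesh {a b : ℝ} (π : RPartition a b) : ℝ :=
  sSup {r : ℝ | ∃ i : ℕ, i < π.n ∧ r = π.t (i + 1) - π.t i}

/-- The compensated Riemann sum `Σ_{[u,v] ∈ π} S(b - u)[y_u X_{u,v} + y'_u X⁽²⁾_{u,v}]`. -/
noncomputable def convRiemannSum (𝓑 : BanachScale) (Sg : ScaleSemigroup 𝓑)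
    (X : ℝ → ℝ) (X2 : ℝ → ℝ → ℝ) (y y' : ℝ → 𝓑.E) {a b : ℝ} (π : RPartition a b) : 𝓑.E :=
  ∑ i ∈ Finset.range π.n,
    Sg.S (b - π.t i)
      ((X (π.t (i + 1)) - X (π.t i)) • y (π.t i) + X2 (π.t i) (π.t (i + 1)) • y' (π.t i))

/-- `I` is the rough convolution `∫_a^b S(b-r) y_r d𝐗_r`, i.e. the limit in `B_θ` of the
compensated Riemann sums over partitions of `[a,b]` with vanishing mesh. -/
def IsRoughConvolution (𝓑 : BanachScale) (Sg : ScaleSemigroup 𝓑) (X : ℝ → ℝ)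
    (X2 : ℝ → ℝ → ℝ) (y y' : ℝ → 𝓑.E) (θ a b : ℝ) (I : 𝓑.E) : Prop :=
  𝓑.Mem θ I ∧ ∀ ε > (0:ℝ), ∃ δ > (0:ℝ), ∀ π : RPartition a b, π.mesh < δ →
    𝓑.N θ (convRiemannSum 𝓑 Sg X X2 y y' π - I) ≤ ε

/-- Left Riemann sum of a `B`-valued function. -/
noncomputable def intRiemannSum (𝓑 : BanachScale) (f : ℝ → 𝓑.E) {a b : ℝ}
    (π : RPartition a b) : 𝓑.E :=
  ∑ i ∈ Finset.range π.n, (π.t (i + 1) - π.t i) • f (π.t i)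

/-- `I = ∫_a^b f(s) ds` as a `B_θ`-valued Riemann integral. -/
def IsRiemannIntegral (𝓑 : BanachScale) (θ : ℝ) (f : ℝ → 𝓑.E) (a b : ℝ) (I : 𝓑.E) : Prop :=
  𝓑.Mem θ I ∧ ∀ ε > (0:ℝ), ∃ δ > (0:ℝ), ∀ π : RPartition a b, π.mesh < δ →
    𝓑.N θ (intRiemannSum 𝓑 f π - I) ≤ ε

/-- Assumption (F): the drift `F : B_γ → B_{γ-δ}` is locally Lipschitz continuous and
satisfies a linear growth condition. -/
structure AssumptionF (𝓑 : BanachScale) (γ δ : ℝ) (F : 𝓑.E → 𝓑.E) : Prop where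
  maps : ∀ x : 𝓑.E, 𝓑.Mem γ x → 𝓑.Mem (γ - δ) (F x)
  locLip : ∀ R > (0:ℝ), ∃ L : ℝ, ∀ x y : 𝓑.E, 𝓑.Mem γ x → 𝓑.Mem γ y →
    𝓑.N γ x ≤ R → 𝓑.N γ y ≤ R → 𝓑.N (γ - δ) (F x - F y) ≤ L * 𝓑.N γ (x - y)
  linGrowth : ∃ C : ℝ, ∀ x : 𝓑.E, 𝓑.Mem γ x → 𝓑.N (γ - δ) (F x) ≤ C * (1 + 𝓑.N γ x)

/-- Assumption (G): for `θ ∈ {0, α, 2α}` the diffusion coefficient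
`G : B_{γ-θ} → B_{γ-θ-σ}` is three times continuously (Fréchet) differentiable with bounded
derivatives `DG`, `D²G`, `D³G`, and the derivative of `x ↦ DG(x)G(x) : B_{γ-α} → B_{γ-2α-σ}`
is bounded. -/
structure AssumptionG (𝓑 : BanachScale) (α σ γ : ℝ) (G : 𝓑.E → 𝓑.E)
    (DG : 𝓑.E → 𝓑.E →ₗ[ℝ] 𝓑.E)
    (D2G : 𝓑.E → 𝓑.E →ₗ[ℝ] 𝓑.E →ₗ[ℝ] 𝓑.E)
    (D3G : 𝓑.E → 𝓑.E →ₗ[ℝ] 𝓑.E →ₗ[ℝ] 𝓑.E →ₗ[ℝ] 𝓑.E) : Prop where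
  maps : ∀ θ ∈ ({0, α, 2 * α} : Set ℝ), ∀ x : 𝓑.E, 𝓑.Mem (γ - θ) x → 𝓑.Mem (γ - θ - σ) (G x)
  DG_maps : ∀ θ ∈ ({0, α, 2 * α} : Set ℝ), ∀ x h : 𝓑.E, 𝓑.Mem (γ - θ) x → 𝓑.Mem (γ - θ) h →
    𝓑.Mem (γ - θ - σ) (DG x h)
  DG_bound : ∀ θ ∈ ({0, α, 2 * α} : Set ℝ), ∃ C : ℝ, ∀ x h : 𝓑.E, 𝓑.Mem (γ - θ) x →
    𝓑.Mem (γ - θ) h → 𝓑.N (γ - θ - σ) (DG x h) ≤ C * 𝓑.N (γ - θ) h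
  DG_isDeriv : ∀ θ ∈ ({0, α, 2 * α} : Set ℝ), ∀ x : 𝓑.E, 𝓑.Mem (γ - θ) x → ∀ ε > (0:ℝ),
    ∃ δ > (0:ℝ), ∀ h : 𝓑.E, 𝓑.Mem (γ - θ) h → 𝓑.N (γ - θ) h < δ →
      𝓑.N (γ - θ - σ) (G (x + h) - G x - DG x h) ≤ ε * 𝓑.N (γ - θ) h
  D2G_maps : ∀ θ ∈ ({0, α, 2 * α} : Set ℝ), ∀ x h k : 𝓑.E, 𝓑.Mem (γ - θ) x →
    𝓑.Mem (γ - θ) h → 𝓑.Mem (γ - θ) k → 𝓑.Mem (γ - θ - σ) (D2G x h k)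
  D2G_bound : ∀ θ ∈ ({0, α, 2 * α} : Set ℝ), ∃ C : ℝ, ∀ x h k : 𝓑.E, 𝓑.Mem (γ - θ) x →
    𝓑.Mem (γ - θ) h → 𝓑.Mem (γ - θ) k →
    𝓑.N (γ - θ - σ) (D2G x h k) ≤ C * (𝓑.N (γ - θ) h * 𝓑.N (γ - θ) k)
  D2G_isDeriv : ∀ θ ∈ ({0, α, 2 * α} : Set ℝ), ∀ x : 𝓑.E, 𝓑.Mem (γ - θ) x → ∀ ε > (0:ℝ),
    ∃ δ > (0:ℝ), ∀ h : 𝓑.E, 𝓑.Mem (γ - θ) h → 𝓑.N (γ - θ) h < δ → ∀ k : 𝓑.E,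
      𝓑.Mem (γ - θ) k →
      𝓑.N (γ - θ - σ) (DG (x + h) k - DG x k - D2G x h k) ≤ ε * (𝓑.N (γ - θ) h * 𝓑.N (γ - θ) k)
  D3G_maps : ∀ θ ∈ ({0, α, 2 * α} : Set ℝ), ∀ x h k l : 𝓑.E, 𝓑.Mem (γ - θ) x →
    𝓑.Mem (γ - θ) h → 𝓑.Mem (γ - θ) k → 𝓑.Mem (γ - θ) l → 𝓑.Mem (γ - θ - σ) (D3G x h k l)
  D3G_bound : ∀ θ ∈ ({0, α, 2 * α} : Set ℝ), ∃ C : ℝ, ∀ x h k l : 𝓑.E, 𝓑.Mem (γ - θ) x →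
    𝓑.Mem (γ - θ) h → 𝓑.Mem (γ - θ) k → 𝓑.Mem (γ - θ) l →
    𝓑.N (γ - θ - σ) (D3G x h k l) ≤ C * (𝓑.N (γ - θ) h * (𝓑.N (γ - θ) k * 𝓑.N (γ - θ) l))
  D3G_isDeriv : ∀ θ ∈ ({0, α, 2 * α} : Set ℝ), ∀ x : 𝓑.E, 𝓑.Mem (γ - θ) x → ∀ ε > (0:ℝ),
    ∃ δ > (0:ℝ), ∀ h : 𝓑.E, 𝓑.Mem (γ - θ) h → 𝓑.N (γ - θ) h < δ → ∀ k l : 𝓑.E,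
      𝓑.Mem (γ - θ) k → 𝓑.Mem (γ - θ) l →
      𝓑.N (γ - θ - σ) (D2G (x + h) k l - D2G x k l - D3G x h k l)
        ≤ ε * (𝓑.N (γ - θ) h * (𝓑.N (γ - θ) k * 𝓑.N (γ - θ) l))
  D3G_cont : ∀ θ ∈ ({0, α, 2 * α} : Set ℝ), ∀ x : 𝓑.E, 𝓑.Mem (γ - θ) x → ∀ ε > (0:ℝ),
    ∃ δ > (0:ℝ), ∀ x' : 𝓑.E, 𝓑.Mem (γ - θ) x' → 𝓑.N (γ - θ) (x' - x) < δ →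
      ∀ h k l : 𝓑.E, 𝓑.Mem (γ - θ) h → 𝓑.Mem (γ - θ) k → 𝓑.Mem (γ - θ) l →
      𝓑.N (γ - θ - σ) (D3G x' h k l - D3G x h k l)
        ≤ ε * (𝓑.N (γ - θ) h * (𝓑.N (γ - θ) k * 𝓑.N (γ - θ) l))
  DGG_deriv_bounded : ∃ (L : 𝓑.E → 𝓑.E →ₗ[ℝ] 𝓑.E) (C : ℝ),
    (∀ x h : 𝓑.E, 𝓑.Mem (γ - α) x → 𝓑.Mem (γ - α) h →
      𝓑.Mem (γ - 2 * α - σ) (L x h) ∧ 𝓑.N (γ - 2 * α - σ) (L x h) ≤ C * 𝓑.N (γ - α) h) ∧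
    ∀ x : 𝓑.E, 𝓑.Mem (γ - α) x → ∀ ε > (0:ℝ), ∃ δ > (0:ℝ), ∀ h : 𝓑.E, 𝓑.Mem (γ - α) h →
      𝓑.N (γ - α) h < δ →
      𝓑.N (γ - 2 * α - σ) (DG (x + h) (G (x + h)) - DG x (G x) - L x h) ≤ ε * 𝓑.N (γ - α) h

/-- `y` is a (mild) solution on `[0,T']` of the rough evolution equation
`dy = (Ay + F(y))dt + G(y)d𝐗`, `y(0) = y₀`: the pair `(y, G(y))` is a controlled rough
path in `D^{2α}_{X,γ}([0,T'])` and the mild formulation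
`y_t = S(t)y₀ + ∫₀ᵗ S(t-s)F(y_s)ds + ∫₀ᵗ S(t-s)G(y_s)d𝐗_s` holds, the rough convolution
being the limit of the compensated Riemann sums
`Σ S(t-u)[G(y_u)X_{u,v} + DG(y_u)G(y_u)X⁽²⁾_{u,v}]`. -/
structure IsSolution (𝓑 : BanachScale) (Sg : ScaleSemigroup 𝓑) (α γ : ℝ)
    (X : ℝ → ℝ) (X2 : ℝ → ℝ → ℝ) (F G : 𝓑.E → 𝓑.E) (DG : 𝓑.E → 𝓑.E →ₗ[ℝ] 𝓑.E)
    (y₀ : 𝓑.E) (T' : ℝ) (y : ℝ → 𝓑.E) : Prop where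
  controlled : IsControlledPath 𝓑 α γ T' X y fun t => G (y t)
  init : y 0 = y₀
  mild : ∀ t : ℝ, 0 < t → t ≤ T' → ∃ D Z : 𝓑.E,
    IsRiemannIntegral 𝓑 γ (fun s => Sg.S (t - s) (F (y s))) 0 t D ∧
    IsRoughConvolution 𝓑 Sg X X2 (fun s => G (y s)) (fun s => DG (y s) (G (y s)))
      (γ - 2 * α) 0 t Z ∧
    y t = Sg.S t y₀ + D + Z

/-- The Borel σ-algebra of `B_θ`, generated by the `|·|_θ`-balls of `B_θ`,
as a σ-algebra on the ambient space. -/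
def scaleBorel (𝓑 : BanachScale) (θ : ℝ) : MeasurableSpace 𝓑.E :=
  MeasurableSpace.generateFrom
    {s : Set 𝓑.E | ∃ (c : 𝓑.E) (r : ℝ), s = {x | 𝓑.Mem θ x ∧ 𝓑.N θ (x - c) < r}}

section Helpers
open Finset

namespace BanachScale
variable (𝓑 : BanachScale)

lemma N_neg (θ : ℝ) (x : 𝓑.E) : 𝓑.N θ (-x) = 𝓑.N θ x := by
  rw [← neg_one_smul ℝ x, 𝓑.N_smul]; simp

lemma mem_sub (θ : ℝ) (x y : 𝓑.E) (hx : 𝓑.Mem θ x) (hy : 𝓑.Mem θ y) :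
    𝓑.Mem θ (x - y) := by
  rw [sub_eq_add_neg]; exact 𝓑.mem_add θ x (-y) hx (𝓑.mem_neg θ y hy)

lemma N_sub_le (θ : ℝ) (x y : 𝓑.E) (hx : 𝓑.Mem θ x) (hy : 𝓑.Mem θ y) :
    𝓑.N θ (x - y) ≤ 𝓑.N θ x + 𝓑.N θ y := by
  rw [sub_eq_add_neg]
  exact (𝓑.N_add θ x (-y) hx (𝓑.mem_neg θ y hy)).trans (by rw [𝓑.N_neg])

lemma N_add3 (θ : ℝ) (x y z : 𝓑.E) (hx : 𝓑.Mem θ x) (hy : 𝓑.Mem θ y) (hz : 𝓑.Mem θ z) :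
    𝓑.N θ (x + y + z) ≤ 𝓑.N θ x + 𝓑.N θ y + 𝓑.N θ z := by
  calc 𝓑.N θ (x + y + z) ≤ 𝓑.N θ (x + y) + 𝓑.N θ z :=
        𝓑.N_add θ (x + y) z (𝓑.mem_add θ x y hx hy) hz
    _ ≤ 𝓑.N θ x + 𝓑.N θ y + 𝓑.N θ z := by
        have := 𝓑.N_add θ x y hx hy; linarith

lemma N_rev (θ : ℝ) (x y : 𝓑.E) (hx : 𝓑.Mem θ x) (hy : 𝓑.Mem θ y) :
    𝓑.N θ x ≤ 𝓑.N θ (x - y) + 𝓑.N θ y := by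
  have h := 𝓑.N_add θ (x - y) y (𝓑.mem_sub θ x y hx hy) hy
  simpa using h

lemma N_sub3 (θ : ℝ) (x y z : 𝓑.E) (hx : 𝓑.Mem θ x) (hy : 𝓑.Mem θ y) (hz : 𝓑.Mem θ z) :
    𝓑.N θ (x - y - z) ≤ 𝓑.N θ x + 𝓑.N θ y + 𝓑.N θ z := by
  have h1 := 𝓑.N_sub_le θ (x - y) z (𝓑.mem_sub θ x y hx hy) hz
  have h2 := 𝓑.N_sub_le θ x y hx hy
  linarith

lemma mem_finsum (θ : ℝ) {ι : Type*} (s : Finset ι) (f : ι → 𝓑.E)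
    (h : ∀ i ∈ s, 𝓑.Mem θ (f i)) : 𝓑.Mem θ (∑ i ∈ s, f i) :=
  Finset.sum_induction f (𝓑.Mem θ) (𝓑.mem_add θ) (𝓑.mem_zero θ) h

/-- Boundedness of a continuous path on a compact interval. -/
lemma bdd_of_cont (θ T : ℝ) (hT : 0 ≤ T) (f : ℝ → 𝓑.E)
    (hmem : ∀ t : ℝ, 0 ≤ t → t ≤ T → 𝓑.Mem θ (f t))
    (hcont : ∀ t : ℝ, 0 ≤ t → t ≤ T → ∀ ε > (0:ℝ), ∃ δ > (0:ℝ), ∀ s : ℝ, 0 ≤ s → s ≤ T →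
      |s - t| < δ → 𝓑.N θ (f s - f t) < ε) :
    ∃ M : ℝ, 0 ≤ M ∧ ∀ t : ℝ, 0 ≤ t → t ≤ T → 𝓑.N θ (f t) ≤ M := by
  set g : ℝ → ℝ := fun t => 𝓑.N θ (f t) with hg
  have hcg : ContinuousOn g (Set.Icc 0 T) := by
    intro t ht
    rw [Metric.continuousWithinAt_iff]
    intro ε hε
    obtain ⟨d, hd, hprop⟩ := hcont t ht.1 ht.2 ε hε
    refine ⟨d, hd, ?_⟩
    intro s hs hds
    have h1 : 𝓑.N θ (f s - f t) < ε := by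
      apply hprop s hs.1 hs.2
      simpa [Real.dist_eq] using hds
    rw [Real.dist_eq, abs_sub_lt_iff]
    have hmt := hmem t ht.1 ht.2
    have hms := hmem s hs.1 hs.2
    have r1 := 𝓑.N_rev θ (f s) (f t) hms hmt
    have r2 := 𝓑.N_rev θ (f t) (f s) hmt hms
    have : 𝓑.N θ (f t - f s) = 𝓑.N θ (f s - f t) := by
      rw [← 𝓑.N_neg θ (f t - f s)]; congr 1; abel
    constructor <;> [skip; skip] <;> simp only [hg] <;> linarith [this]
  obtain ⟨x, hx, hmax⟩ := isCompact_Icc.exists_isMaxOn (Set.nonempty_Icc.mpr hT) hcg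
  refine ⟨max (g x) 0, le_max_right _ _, fun t h0 hT' => ?_⟩
  exact le_trans (hmax ⟨h0, hT'⟩) (le_max_left _ _)

end BanachScale

namespace RPartition
variable {a b : ℝ} (π : RPartition a b)

lemma t_lt : ∀ j : ℕ, j ≤ π.n → ∀ i : ℕ, i < j → π.t i < π.t j := by
  intro j
  induction j with
  | zero => intro _ i hi; omega
  | succ j ih =>
    intro hj i hi
    have hjn : j < π.n := hj
    have h1 : π.t j < π.t (j + 1) := π.strict j hjn
    rcases Nat.lt_succ_iff_lt_or_eq.mp hi with h | h
    · exact (ih hjn.le i h).trans h1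
    · rw [h]; exact h1

lemma t_le {i j : ℕ} (hij : i ≤ j) (hj : j ≤ π.n) : π.t i ≤ π.t j := by
  rcases eq_or_lt_of_le hij with h | h
  · rw [h]
  · exact (π.t_lt j hj i h).le

lemma t_mem {i : ℕ} (hi : i ≤ π.n) : a ≤ π.t i ∧ π.t i ≤ b := by
  constructor
  · have := π.t_le (Nat.zero_le i) hi; rwa [π.first] at this
  · have := π.t_le hi le_rfl; rwa [π.last] at this

lemma inc_le_mesh {i : ℕ} (hi : i < π.n) : π.t (i + 1) - π.t i ≤ π.mesh := by
  apply le_csSup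
  · have hsub : {r : ℝ | ∃ i : ℕ, i < π.n ∧ r = π.t (i + 1) - π.t i}
        ⊆ (fun i : ℕ => π.t (i + 1) - π.t i) '' Set.Iio π.n := by
      rintro r ⟨i, hi, rfl⟩; exact ⟨i, hi, rfl⟩
    exact (((Set.finite_Iio π.n).image _).subset hsub).bddAbove
  · exact ⟨i, hi, rfl⟩

lemma mesh_le {B : ℝ} (h : ∀ i : ℕ, i < π.n → π.t (i + 1) - π.t i ≤ B) : π.mesh ≤ B :=
  csSup_le ⟨π.t 1 - π.t 0, 0, π.n_pos, rfl⟩ (by rintro r ⟨i, hi, rfl⟩; exact h i hi)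

lemma mesh_pos : 0 < π.mesh :=
  lt_of_lt_of_le (by linarith [π.strict 0 π.n_pos]) (π.inc_le_mesh π.n_pos)

end RPartition

end Helpers

section Split
open Finset Classical in
/-- Splitting a partition of `[0,t]` at an interior point `τ`. -/
lemma split_sum {E : Type} [AddCommGroup E] {t τ : ℝ} (hτ : 0 < τ) (hτt : τ < t)
    (π : RPartition 0 t) (Φ : ℝ → ℝ → E) (hΦ : Φ τ τ = 0) :
    ∃ (π₁ : RPartition 0 τ) (π₂ : RPartition 0 (t - τ)) (u w : ℝ),
      π₁.mesh ≤ π.mesh ∧ π₂.mesh ≤ π.mesh ∧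
      0 ≤ u ∧ u ≤ τ ∧ τ ≤ w ∧ w ≤ t ∧ w - u ≤ π.mesh ∧
      ∑ i ∈ Finset.range π.n, Φ (π.t i) (π.t (i + 1))
        = (∑ i ∈ Finset.range π₁.n, Φ (π₁.t i) (π₁.t (i + 1)))
          + (∑ i ∈ Finset.range π₂.n, Φ (τ + π₂.t i) (τ + π₂.t (i + 1)))
          + (Φ u w - Φ u τ - Φ τ w) := by
  classical
  set P : ℕ → Prop := fun i => π.t i ≤ τ with hP
  set k : ℕ := Nat.findGreatest P π.n with hk
  have hP0 : P 0 := by simp only [hP, π.first]; exact hτ.le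
  have hk0 : π.t k ≤ τ := Nat.findGreatest_spec (Nat.zero_le _) hP0
  have hkn : k ≤ π.n := Nat.findGreatest_le _
  have hkltn : k < π.n := by
    rcases eq_or_lt_of_le hkn with h | h
    · exfalso; rw [h, π.last] at hk0; linarith
    · exact h
  have hk1 : τ < π.t (k + 1) := by
    by_contra hcon
    push_neg at hcon
    exact Nat.findGreatest_is_greatest (Nat.lt_succ_self k) hkltn hcon
  have h0k : ∀ i : ℕ, i ≤ k → 0 ≤ π.t i := fun i hi => (π.t_mem (hi.trans hkn)).1
  rcases eq_or_lt_of_le hk0 with hcase | hcase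
  · -- π.t k = τ
    have hkpos : 0 < k := by
      rcases Nat.eq_zero_or_pos k with h | h
      · exfalso; rw [h, π.first] at hcase; linarith
      · exact h
    refine ⟨⟨k, π.t, hkpos, fun i hi => π.strict i (hi.trans hkltn), π.first, hcase⟩,
      ⟨π.n - k, fun i => π.t (k + i) - τ, by omega,
        fun i hi => by
          show π.t (k + i) - τ < π.t (k + (i + 1)) - τ
          have h2 : k + i < π.n := by omega
          have h3 := π.strict (k + i) h2
          have harg : k + (i + 1) = k + i + 1 := by omega
          rw [harg]; linarith,
        by show π.t (k + 0) - τ = 0; rw [Nat.add_zero, hcase]; ring,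
        by show π.t (k + (π.n - k)) - τ = t - τ
           have h4 : k + (π.n - k) = π.n := by omega
           rw [h4, π.last]⟩,
      τ, τ, ?_, ?_, hτ.le, le_rfl, le_rfl, hτt.le, by simpa using π.mesh_pos.le, ?_⟩
    · exact RPartition.mesh_le _ fun i hi => π.inc_le_mesh ((show i < k from hi).trans hkltn)
    · apply RPartition.mesh_le
      intro i hi
      have hi' : i < π.n - k := hi
      show (π.t (k + (i + 1)) - τ) - (π.t (k + i) - τ) ≤ π.mesh
      have h1 : k + (i + 1) = (k + i) + 1 := by omega
      have h2 : k + i < π.n := by omega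
      rw [h1]
      have := π.inc_le_mesh h2
      linarith
    · -- sum identity
      simp only [hΦ]
      have hsplit : ∑ i ∈ Finset.range π.n, Φ (π.t i) (π.t (i + 1))
          = (∑ i ∈ Finset.range k, Φ (π.t i) (π.t (i + 1)))
            + ∑ i ∈ Finset.Ico k π.n, Φ (π.t i) (π.t (i + 1)) := by
        rw [Finset.range_eq_Ico, ← Finset.sum_Ico_consecutive _ (Nat.zero_le k) hkn,
          ← Finset.range_eq_Ico]
      have h2 : ∑ i ∈ Finset.Ico k π.n, Φ (π.t i) (π.t (i + 1))
          = ∑ i ∈ Finset.range (π.n - k), Φ (π.t (k + i)) (π.t (k + (i + 1))) := by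
        rw [Finset.sum_Ico_eq_sum_range]
        apply Finset.sum_congr rfl
        intro i _
        congr 2 <;> omega
      rw [hsplit, h2]
      have h3 : ∀ i ∈ Finset.range (π.n - k),
          Φ (τ + (π.t (k + i) - τ)) (τ + (π.t (k + (i + 1)) - τ))
            = Φ (π.t (k + i)) (π.t (k + (i + 1))) := by
        intro i _; congr 1 <;> ring
      rw [Finset.sum_congr rfl h3]
      abel
  · -- π.t k < τ
    refine ⟨⟨k + 1, fun i => if i ≤ k then π.t i else τ, Nat.succ_pos _,
        fun i hi => by
          show (if i ≤ k then π.t i else τ) < (if i + 1 ≤ k then π.t (i + 1) else τ)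
          rcases Nat.lt_succ_iff_lt_or_eq.mp hi with h | h
          · rw [if_pos h.le, if_pos (show i + 1 ≤ k from h)]
            exact π.strict i (by omega)
          · rw [if_pos (le_of_eq h), if_neg (by omega : ¬ i + 1 ≤ k), h]
            exact hcase,
        by show (if 0 ≤ k then π.t 0 else τ) = 0
           rw [if_pos (Nat.zero_le k)]; exact π.first,
        by show (if k + 1 ≤ k then π.t (k + 1) else τ) = τ
           rw [if_neg (by omega : ¬ k + 1 ≤ k)]⟩,
      ⟨π.n - k, fun i => if i = 0 then 0 else π.t (k + i) - τ, by omega,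
        fun i hi => by
          show (if i = 0 then 0 else π.t (k + i) - τ)
            < (if i + 1 = 0 then 0 else π.t (k + (i + 1)) - τ)
          rw [if_neg (by omega : ¬ i + 1 = 0)]
          rcases Nat.eq_zero_or_pos i with h | h
          · rw [if_pos h, h]
            rw [show k + (0 + 1) = k + 1 from by omega]; linarith
          · rw [if_neg (by omega : ¬ i = 0)]
            have h2 : k + i < π.n := by omega
            have h3 := π.strict (k + i) h2
            rw [show k + (i + 1) = k + i + 1 from by omega]; linarith,
        by show (if (0:ℕ) = 0 then (0:ℝ) else π.t (k + 0) - τ) = 0; rw [if_pos rfl],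
        by
          show (if π.n - k = 0 then (0:ℝ) else π.t (k + (π.n - k)) - τ) = t - τ
          have hne : ¬ (π.n - k = 0) := by omega
          simp only [if_neg hne]
          have h4 : k + (π.n - k) = π.n := by omega
          rw [h4, π.last]⟩,
      π.t k, π.t (k + 1), ?_, ?_, h0k k le_rfl, hk0, hk1.le, (π.t_mem (by omega : k + 1 ≤ π.n)).2,
      π.inc_le_mesh hkltn, ?_⟩
    · apply RPartition.mesh_le
      intro i hi
      have hi' : i < k + 1 := hi
      show (if i + 1 ≤ k then π.t (i + 1) else τ) - (if i ≤ k then π.t i else τ) ≤ π.mesh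
      rcases Nat.lt_succ_iff_lt_or_eq.mp hi' with h | h
      · rw [if_pos h.le, if_pos (show i + 1 ≤ k from h)]
        exact π.inc_le_mesh (by omega)
      · rw [if_pos (le_of_eq h), if_neg (by omega : ¬ i + 1 ≤ k), h]
        have := π.inc_le_mesh hkltn
        linarith
    · apply RPartition.mesh_le
      intro i hi
      have hi' : i < π.n - k := hi
      show (if i + 1 = 0 then 0 else π.t (k + (i + 1)) - τ)
          - (if i = 0 then 0 else π.t (k + i) - τ) ≤ π.mesh
      rw [if_neg (by omega : ¬ i + 1 = 0)]
      rcases Nat.eq_zero_or_pos i with h | h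
      · rw [if_pos h, h, show k + (0 + 1) = k + 1 from by omega]
        have := π.inc_le_mesh hkltn
        linarith
      · rw [if_neg (by omega : ¬ i = 0), show k + (i + 1) = k + i + 1 from by omega]
        have := π.inc_le_mesh (show k + i < π.n by omega)
        linarith
    · -- sum identity
      have hsplit : ∑ i ∈ Finset.range π.n, Φ (π.t i) (π.t (i + 1))
          = (∑ i ∈ Finset.range k, Φ (π.t i) (π.t (i + 1)))
            + Φ (π.t k) (π.t (k + 1))
            + ∑ i ∈ Finset.Ico (k + 1) π.n, Φ (π.t i) (π.t (i + 1)) := by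
        rw [Finset.range_eq_Ico, ← Finset.sum_Ico_consecutive _ (Nat.zero_le (k+1)) hkltn,
          ← Finset.range_eq_Ico, Finset.sum_range_succ]
      have hS1 : ∑ i ∈ Finset.range (k + 1),
          Φ (if i ≤ k then π.t i else τ) (if i + 1 ≤ k then π.t (i + 1) else τ)
          = (∑ i ∈ Finset.range k, Φ (π.t i) (π.t (i + 1))) + Φ (π.t k) τ := by
        rw [Finset.sum_range_succ]
        congr 1
        · apply Finset.sum_congr rfl
          intro i hi
          have hik : i < k := Finset.mem_range.mp hi
          rw [if_pos hik.le, if_pos (show i + 1 ≤ k from hik)]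
        · rw [if_pos le_rfl, if_neg (by omega : ¬ k + 1 ≤ k)]
      have hnk : π.n - k = (π.n - k - 1) + 1 := by omega
      have hS2 : ∑ i ∈ Finset.range (π.n - k),
          Φ (τ + (if i = 0 then 0 else π.t (k + i) - τ))
            (τ + (if i + 1 = 0 then 0 else π.t (k + (i + 1)) - τ))
          = Φ τ (π.t (k + 1))
            + ∑ i ∈ Finset.Ico (k + 1) π.n, Φ (π.t i) (π.t (i + 1)) := by
        have hIco : ∑ i ∈ Finset.Ico (k + 1) π.n, Φ (π.t i) (π.t (i + 1))
            = ∑ i ∈ Finset.range (π.n - k - 1), Φ (π.t (k + 1 + i)) (π.t (k + 1 + i + 1)) := by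
          rw [Finset.sum_Ico_eq_sum_range]
          apply Finset.sum_congr rfl
          intro i _
          rfl
        rw [hnk, Finset.sum_range_succ', hIco]
        have hmain : ∀ i ∈ Finset.range (π.n - k - 1),
            Φ (τ + (if i + 1 = 0 then 0 else π.t (k + (i + 1)) - τ))
              (τ + (if i + 1 + 1 = 0 then 0 else π.t (k + (i + 1 + 1)) - τ))
            = Φ (π.t (k + 1 + i)) (π.t (k + 1 + i + 1)) := by
          intro i _
          rw [if_neg (by omega : ¬ i + 1 = 0), if_neg (by omega : ¬ i + 1 + 1 = 0)]
          have e1 : τ + (π.t (k + (i + 1)) - τ) = π.t (k + 1 + i) := by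
            rw [show k + (i + 1) = k + 1 + i by omega]; ring
          have e2 : τ + (π.t (k + (i + 1 + 1)) - τ) = π.t (k + 1 + i + 1) := by
            rw [show k + (i + 1 + 1) = k + 1 + i + 1 by omega]; ring
          rw [e1, e2]
        rw [Finset.sum_congr rfl hmain]
        have h0 : Φ (τ + (if (0:ℕ) = 0 then 0 else π.t (k + 0) - τ))
            (τ + (if (0:ℕ) + 1 = 0 then 0 else π.t (k + (0 + 1)) - τ)) = Φ τ (π.t (k + 1)) := by
          rw [if_pos rfl, if_neg (by omega : ¬ (0:ℕ) + 1 = 0)]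
          have e1 : τ + (0:ℝ) = τ := by ring
          have e2 : τ + (π.t (k + (0 + 1)) - τ) = π.t (k + 1) := by
            rw [show k + (0 + 1) = k + 1 by omega]; ring
          rw [e1, e2]
        rw [h0]
        abel
      dsimp only
      rw [hsplit, hS1, hS2]
      abel

end Split

set_option maxHeartbeats 4000000

/-- **concatenation of solutions.** If `(y¹, G(y¹))` solves the rough
evolution equation on `[0,τ]` with initial datum `y₀` driven by `𝐗`, and `(y², G(y²))`
solves it on `[0,τ']` with initial datum `y¹_τ` driven by the time-shifted rough path
`X̃_t = X_{τ+t} - X_τ`, `X̃⁽²⁾_{s,t} = X⁽²⁾_{τ+s,τ+t}`, then the concatenation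
`y_t = y¹_t` for `t ∈ [0,τ]`, `y_t = y²_{t-τ}` for `t ∈ [τ, τ+τ']`, solves the rough
evolution equation on `[0, τ+τ']` with initial datum `y₀`. -/
theorem statement18 (α γ δ σ τ τ' : ℝ) (hα : 1/3 < α) (hα' : α < 1/2)
    (hτ : 0 < τ) (hτ' : 0 < τ') (hδ : 0 ≤ δ) (hδ' : δ < 1) (hσ : 0 ≤ σ) (hσα : σ < α)
    (𝓑 : BanachScale) (Sg : ScaleSemigroup 𝓑) (RP : RoughPath α (τ + τ'))
    (F G : 𝓑.E → 𝓑.E) (DG : 𝓑.E → 𝓑.E →ₗ[ℝ] 𝓑.E)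
    (D2G : 𝓑.E → 𝓑.E →ₗ[ℝ] 𝓑.E →ₗ[ℝ] 𝓑.E)
    (D3G : 𝓑.E → 𝓑.E →ₗ[ℝ] 𝓑.E →ₗ[ℝ] 𝓑.E →ₗ[ℝ] 𝓑.E)
    (hF : AssumptionF 𝓑 γ δ F) (hG : AssumptionG 𝓑 α σ γ G DG D2G D3G)
    (y₀ : 𝓑.E) (hy₀ : 𝓑.Mem γ y₀) (y₁ y₂ : ℝ → 𝓑.E)
    (h1 : IsSolution 𝓑 Sg α γ RP.X RP.X2 F G DG y₀ τ y₁)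
    (h2 : IsSolution 𝓑 Sg α γ (fun t => RP.X (τ + t) - RP.X τ)
      (fun s t => RP.X2 (τ + s) (τ + t)) F G DG (y₁ τ) τ' y₂) :
    IsSolution 𝓑 Sg α γ RP.X RP.X2 F G DG y₀ (τ + τ')
      (fun t => if t ≤ τ then y₁ t else y₂ (t - τ)) := by
  have hα0 : (0:ℝ) < α := by linarith
  have h2α0 : (0:ℝ) < 2 * α := by linarith
  have hT0 : (0:ℝ) < τ + τ' := by linarith
  set y : ℝ → 𝓑.E := fun t => if t ≤ τ then y₁ t else y₂ (t - τ) with hy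
  have h1c := h1.controlled
  have h2c := h2.controlled
  have hy_left : ∀ s : ℝ, s ≤ τ → y s = y₁ s := fun s hs => if_pos hs
  have hy_right' : ∀ s : ℝ, τ < s → y s = y₂ (s - τ) := fun s hs => if_neg (not_le.mpr hs)
  have hy_right : ∀ v : ℝ, 0 ≤ v → y (τ + v) = y₂ v := by
    intro v hv
    by_cases h : τ + v ≤ τ
    · have hv0 : v = 0 := le_antisymm (by linarith) hv
      rw [hv0, add_zero, hy_left τ le_rfl, ← h2.init]
    · rw [hy_right' (τ + v) (by linarith [not_le.mp h]), add_sub_cancel_left]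
  -- Hölder constants for X
  obtain ⟨CX₀, hCX₀⟩ := RP.holderX
  set CX : ℝ := max CX₀ 0 with hCXdef
  have hCX0 : 0 ≤ CX := le_max_right _ _
  have hCX : ∀ s t : ℝ, 0 ≤ s → s ≤ t → t ≤ (τ + τ') → |RP.X t - RP.X s| ≤ CX * (t - s) ^ α := by
    intro s t hs hst htT
    exact (hCX₀ s t hs hst htT).trans
      (mul_le_mul_of_nonneg_right (le_max_left _ _) (Real.rpow_nonneg (by linarith) _))
  obtain ⟨CX2₀, hCX2₀⟩ := RP.holderX2
  set CX2 : ℝ := max CX2₀ 0 with hCX2def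
  have hCX20 : 0 ≤ CX2 := le_max_right _ _
  have hCX2 : ∀ s t : ℝ, 0 ≤ s → s ≤ t → t ≤ (τ + τ') → |RP.X2 s t| ≤ CX2 * (t - s) ^ (2 * α) := by
    intro s t hs hst htT
    exact (hCX2₀ s t hs hst htT).trans
      (mul_le_mul_of_nonneg_right (le_max_left _ _) (Real.rpow_nonneg (by linarith) _))
  -- rpow helpers
  have hr1 : ∀ a b : ℝ, 0 ≤ a → a ≤ b → a ^ α ≤ b ^ α :=
    fun a b h h' => Real.rpow_le_rpow h h' hα0.le
  have hr2 : ∀ a b : ℝ, 0 ≤ a → a ≤ b → a ^ (2 * α) ≤ b ^ (2 * α) :=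
    fun a b h h' => Real.rpow_le_rpow h h' h2α0.le
  have hrsplit : ∀ c : ℝ, 0 ≤ c → c ^ (2 * α) = c ^ α * c ^ α := by
    intro c hc
    rw [two_mul, Real.rpow_add' hc (by linarith)]
  -- level inequalities
  have hlev1 : γ - 2 * α ≤ γ - α := by linarith
  have hlev2 : γ - α ≤ γ := by linarith
  have hlev3 : γ - 2 * α ≤ γ := by linarith
  have hlev4 : γ - 2 * α ≤ γ - α - σ := by linarith
  have hαmem : α ∈ ({0, α, 2 * α} : Set ℝ) := by simp
  -- membership of y
  have hmem_y : ∀ t : ℝ, 0 ≤ t → t ≤ (τ + τ') → 𝓑.Mem γ (y t) := by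
    intro t h0 hT'
    by_cases h : t ≤ τ
    · rw [hy_left t h]; exact h1c.mem_y t h0 h
    · rw [hy_right' t (not_le.mp h)]
      exact h2c.mem_y (t - τ) (by linarith [not_le.mp h]) (by linarith)
  have hmem_y' : ∀ t : ℝ, 0 ≤ t → t ≤ (τ + τ') → 𝓑.Mem (γ - α) (G (y t)) := by
    intro t h0 hT'
    by_cases h : t ≤ τ
    · rw [hy_left t h]; exact h1c.mem_y' t h0 h
    · rw [hy_right' t (not_le.mp h)]
      exact h2c.mem_y' (t - τ) (by linarith [not_le.mp h]) (by linarith)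
  -- continuity of y
  have hcont_y : ∀ t : ℝ, 0 ≤ t → t ≤ (τ + τ') → ∀ ε > (0:ℝ), ∃ d > (0:ℝ), ∀ s : ℝ, 0 ≤ s → s ≤ (τ + τ') →
      |s - t| < d → 𝓑.N γ (y s - y t) < ε := by
    intro t h0 hT' ε hε
    rcases lt_trichotomy t τ with hlt | heq | hgt
    · obtain ⟨d, hd, hp⟩ := h1c.cont_y t h0 hlt.le ε hε
      refine ⟨min d (τ - t), lt_min hd (by linarith), ?_⟩
      intro s hs0 hsT hst
      have h5 := abs_sub_lt_iff.mp (hst.trans_le (min_le_right _ _))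
      have hsτ : s ≤ τ := by linarith [h5.1]
      rw [hy_left s hsτ, hy_left t hlt.le]
      exact hp s hs0 hsτ (hst.trans_le (min_le_left _ _))
    · obtain ⟨d₁, hd₁, hp₁⟩ := h1c.cont_y τ hτ.le le_rfl ε hε
      obtain ⟨d₂, hd₂, hp₂⟩ := h2c.cont_y 0 le_rfl hτ'.le ε hε
      refine ⟨min d₁ d₂, lt_min hd₁ hd₂, ?_⟩
      intro s hs0 hsT hst
      rw [heq] at hst ⊢
      by_cases h : s ≤ τ
      · rw [hy_left s h, hy_left τ le_rfl]
        exact hp₁ s hs0 h (hst.trans_le (min_le_left _ _))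
      · rw [hy_right' s (not_le.mp h), hy_left τ le_rfl, ← h2.init]
        apply hp₂ (s - τ) (by linarith [not_le.mp h]) (by linarith)
        have h6 : |s - τ - 0| = |s - τ| := by rw [sub_zero]
        rw [h6]
        have h7 : |s - τ| = s - τ := abs_of_pos (by linarith [not_le.mp h])
        have h8 := abs_sub_lt_iff.mp (hst.trans_le (min_le_right _ _))
        rw [h7]; linarith [h8.1]
    · obtain ⟨d, hd, hp⟩ := h2c.cont_y (t - τ) (by linarith) (by linarith) ε hε
      refine ⟨min d (t - τ), lt_min hd (by linarith), ?_⟩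
      intro s hs0 hsT hst
      have h5 := abs_sub_lt_iff.mp (hst.trans_le (min_le_right _ _))
      have hsτ : τ < s := by linarith [h5.2]
      rw [hy_right' s hsτ, hy_right' t hgt]
      apply hp (s - τ) (by linarith) (by linarith)
      rw [show s - τ - (t - τ) = s - t from by ring]
      exact hst.trans_le (min_le_left _ _)
  have hcont_y' : ∀ t : ℝ, 0 ≤ t → t ≤ (τ + τ') → ∀ ε > (0:ℝ), ∃ d > (0:ℝ), ∀ s : ℝ, 0 ≤ s → s ≤ (τ + τ') →
      |s - t| < d → 𝓑.N (γ - α) (G (y s) - G (y t)) < ε := by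
    intro t h0 hT' ε hε
    rcases lt_trichotomy t τ with hlt | heq | hgt
    · obtain ⟨d, hd, hp⟩ := h1c.cont_y' t h0 hlt.le ε hε
      refine ⟨min d (τ - t), lt_min hd (by linarith), ?_⟩
      intro s hs0 hsT hst
      have h5 := abs_sub_lt_iff.mp (hst.trans_le (min_le_right _ _))
      have hsτ : s ≤ τ := by linarith [h5.1]
      rw [hy_left s hsτ, hy_left t hlt.le]
      exact hp s hs0 hsτ (hst.trans_le (min_le_left _ _))
    · obtain ⟨d₁, hd₁, hp₁⟩ := h1c.cont_y' τ hτ.le le_rfl ε hε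
      obtain ⟨d₂, hd₂, hp₂⟩ := h2c.cont_y' 0 le_rfl hτ'.le ε hε
      refine ⟨min d₁ d₂, lt_min hd₁ hd₂, ?_⟩
      intro s hs0 hsT hst
      rw [heq] at hst ⊢
      by_cases h : s ≤ τ
      · rw [hy_left s h, hy_left τ le_rfl]
        exact hp₁ s hs0 h (hst.trans_le (min_le_left _ _))
      · rw [hy_right' s (not_le.mp h), hy_left τ le_rfl, ← h2.init]
        apply hp₂ (s - τ) (by linarith [not_le.mp h]) (by linarith)
        have h6 : |s - τ - 0| = |s - τ| := by rw [sub_zero]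
        rw [h6]
        have h7 : |s - τ| = s - τ := abs_of_pos (by linarith [not_le.mp h])
        have h8 := abs_sub_lt_iff.mp (hst.trans_le (min_le_right _ _))
        rw [h7]; linarith [h8.1]
    · obtain ⟨d, hd, hp⟩ := h2c.cont_y' (t - τ) (by linarith) (by linarith) ε hε
      refine ⟨min d (t - τ), lt_min hd (by linarith), ?_⟩
      intro s hs0 hsT hst
      have h5 := abs_sub_lt_iff.mp (hst.trans_le (min_le_right _ _))
      have hsτ : τ < s := by linarith [h5.2]
      rw [hy_right' s hsτ, hy_right' t hgt]
      apply hp (s - τ) (by linarith) (by linarith)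
      rw [show s - τ - (t - τ) = s - t from by ring]
      exact hst.trans_le (min_le_left _ _)
  -- uniform bounds
  obtain ⟨My, hMy0, hMy⟩ := 𝓑.bdd_of_cont γ (τ + τ') hT0.le y hmem_y hcont_y
  obtain ⟨Mg, hMg0, hMg⟩ := 𝓑.bdd_of_cont (γ - α) (τ + τ') hT0.le (fun s => G (y s)) hmem_y' hcont_y'
  -- Hölder continuity of y' = G ∘ y
  have hhol : ∃ C : ℝ, ∀ s t : ℝ, 0 ≤ s → s ≤ t → t ≤ (τ + τ') →
      𝓑.N (γ - 2 * α) (G (y t) - G (y s)) ≤ C * (t - s) ^ α := by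
    obtain ⟨C₁, hC₁⟩ := h1c.holder_y'
    obtain ⟨C₂, hC₂⟩ := h2c.holder_y'
    refine ⟨max C₁ 0 + max C₂ 0, ?_⟩
    intro s t hs hst htT
    have hpow : (0:ℝ) ≤ (t - s) ^ α := Real.rpow_nonneg (by linarith) _
    by_cases ht : t ≤ τ
    · rw [hy_left t ht, hy_left s (hst.trans ht)]
      refine (hC₁ s t hs hst ht).trans ?_
      apply mul_le_mul_of_nonneg_right _ hpow
      have := le_max_left C₁ 0
      have := le_max_right C₂ (0:ℝ)
      linarith
    · by_cases hsτ : s ≤ τ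
      · -- mixed case
        have htτ : τ < t := not_le.mp ht
        have htT' : t - τ ≤ τ' := by linarith
        have key : G (y t) - G (y s)
            = (G (y₂ (t - τ)) - G (y₂ 0)) + (G (y₁ τ) - G (y₁ s)) := by
          rw [hy_right' t htτ, hy_left s hsτ, h2.init]; abel
        rw [key]
        have hm1 : 𝓑.Mem (γ - 2 * α) (G (y₂ (t - τ)) - G (y₂ 0)) :=
          𝓑.mem_sub _ _ _ (𝓑.mem_mono hlev1 _ (h2c.mem_y' (t - τ) (by linarith) htT'))
            (𝓑.mem_mono hlev1 _ (h2c.mem_y' 0 le_rfl hτ'.le))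
        have hm2 : 𝓑.Mem (γ - 2 * α) (G (y₁ τ) - G (y₁ s)) :=
          𝓑.mem_sub _ _ _ (𝓑.mem_mono hlev1 _ (h1c.mem_y' τ hτ.le le_rfl))
            (𝓑.mem_mono hlev1 _ (h1c.mem_y' s hs hsτ))
        refine (𝓑.N_add _ _ _ hm1 hm2).trans ?_
        have hb1 := hC₂ 0 (t - τ) le_rfl (by linarith) htT'
        rw [sub_zero] at hb1
        have hb2 := hC₁ s τ hs hsτ le_rfl
        have hp1 : (t - τ) ^ α ≤ (t - s) ^ α := hr1 _ _ (by linarith) (by linarith)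
        have hp2 : (τ - s) ^ α ≤ (t - s) ^ α := hr1 _ _ (by linarith) (by linarith)
        have hn1 := 𝓑.N_nonneg (γ - 2 * α) (G (y₂ (t - τ)) - G (y₂ 0))
        have hn2 := 𝓑.N_nonneg (γ - 2 * α) (G (y₁ τ) - G (y₁ s))
        have hq1 : (0:ℝ) ≤ (t - τ) ^ α := Real.rpow_nonneg (by linarith) _
        have hq2 : (0:ℝ) ≤ (τ - s) ^ α := Real.rpow_nonneg (by linarith) _
        have e1 : C₂ * (t - τ) ^ α ≤ max C₂ 0 * (t - s) ^ α :=
          le_trans (mul_le_mul_of_nonneg_right (le_max_left _ _) hq1)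
            (mul_le_mul_of_nonneg_left hp1 (le_max_right _ _))
        have e2 : C₁ * (τ - s) ^ α ≤ max C₁ 0 * (t - s) ^ α :=
          le_trans (mul_le_mul_of_nonneg_right (le_max_left _ _) hq2)
            (mul_le_mul_of_nonneg_left hp2 (le_max_right _ _))
        rw [add_mul]
        linarith
      · have hsτ' : τ < s := not_le.mp hsτ
        rw [hy_right' t (by linarith), hy_right' s hsτ']
        have hb := hC₂ (s - τ) (t - τ) (by linarith) (by linarith)
          (by linarith)
        rw [show t - τ - (s - τ) = t - s from by ring] at hb
        refine hb.trans ?_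
        apply mul_le_mul_of_nonneg_right _ (Real.rpow_nonneg (by linarith) _)
        have := le_max_left C₂ 0
        have := le_max_right C₁ (0:ℝ)
        linarith
  -- remainder identities helper (membership)
  have memgub : ∀ (X' : ℝ → ℝ) (f f' : ℝ → 𝓑.E) (θ' : ℝ), θ' ≤ γ - α → ∀ s u : ℝ,
      𝓑.Mem γ (f u) → 𝓑.Mem γ (f s) → 𝓑.Mem (γ - α) (f' s) →
      𝓑.Mem θ' (gubRemainder 𝓑 X' f f' s u) := by
    intro X' f f' θ' hθ' s u hfu hfs hf's
    exact 𝓑.mem_sub _ _ _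
      (𝓑.mem_sub _ _ _ (𝓑.mem_mono (hθ'.trans hlev2) _ hfu)
        (𝓑.mem_mono (hθ'.trans hlev2) _ hfs))
      (𝓑.mem_smul _ _ _ (𝓑.mem_mono hθ' _ hf's))
  -- the remainder of the concatenation, mixed case identity
  have kid : ∀ s t : ℝ, 0 ≤ s → s ≤ τ → τ < t →
      gubRemainder 𝓑 RP.X y (fun r => G (y r)) s t
        = gubRemainder 𝓑 RP.X y₁ (fun r => G (y₁ r)) s τ
          + gubRemainder 𝓑 (fun v => RP.X (τ + v) - RP.X τ) y₂ (fun r => G (y₂ r)) 0 (t - τ)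
          + (RP.X t - RP.X τ) • (G (y₁ τ) - G (y₁ s)) := by
    intro s t hs hsτ hτt
    simp only [gubRemainder]
    rw [hy_left s hsτ, hy_right' t hτt, h2.init,
      show τ + (t - τ) = t from by ring, add_zero]
    module
  have kid2 : ∀ s t : ℝ, τ < s → s ≤ t →
      gubRemainder 𝓑 RP.X y (fun r => G (y r)) s t
        = gubRemainder 𝓑 (fun v => RP.X (τ + v) - RP.X τ) y₂ (fun r => G (y₂ r))
            (s - τ) (t - τ) := by
    intro s t hτs hst
    simp only [gubRemainder]
    rw [hy_right' s hτs, hy_right' t (by linarith),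
      show τ + (t - τ) = t from by ring, show τ + (s - τ) = s from by ring]
    module
  have kid1 : ∀ s t : ℝ, s ≤ τ → t ≤ τ →
      gubRemainder 𝓑 RP.X y (fun r => G (y r)) s t
        = gubRemainder 𝓑 RP.X y₁ (fun r => G (y₁ r)) s t := by
    intro s t hsτ htτ
    simp only [gubRemainder]
    rw [hy_left s hsτ, hy_left t htτ]
  -- remainder bounds
  have hrema : ∃ C : ℝ, ∀ s t : ℝ, 0 ≤ s → s ≤ t → t ≤ (τ + τ') →
      𝓑.N (γ - α) (gubRemainder 𝓑 RP.X y (fun r => G (y r)) s t) ≤ C * (t - s) ^ α := by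
    obtain ⟨C₁r, hC₁r⟩ := h1c.rem_alpha
    obtain ⟨C₂r, hC₂r⟩ := h2c.rem_alpha
    refine ⟨max C₁r 0 + max C₂r 0 + CX * (2 * Mg), ?_⟩
    intro s t hs hst htT
    have hpow : (0:ℝ) ≤ (t - s) ^ α := Real.rpow_nonneg (by linarith) _
    have hcr0 : (0:ℝ) ≤ CX * (2 * Mg) := mul_nonneg hCX0 (by linarith)
    by_cases ht : t ≤ τ
    · rw [kid1 s t (hst.trans ht) ht]
      refine (hC₁r s t hs hst ht).trans ?_
      apply mul_le_mul_of_nonneg_right _ hpow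
      have := le_max_left C₁r 0
      have := le_max_right C₂r (0:ℝ)
      linarith
    · by_cases hsτ : s ≤ τ
      · have hτt : τ < t := not_le.mp ht
        have ht2 : t - τ ≤ τ' := by linarith
        rw [kid s t hs hsτ hτt]
        have hm1 := memgub RP.X y₁ (fun r => G (y₁ r)) (γ - α) le_rfl s τ
          (h1c.mem_y τ hτ.le le_rfl) (h1c.mem_y s hs hsτ) (h1c.mem_y' s hs hsτ)
        have hm2 := memgub (fun v => RP.X (τ + v) - RP.X τ) y₂ (fun r => G (y₂ r)) (γ - α)
          le_rfl 0 (t - τ) (h2c.mem_y (t - τ) (by linarith) ht2)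
          (h2c.mem_y 0 le_rfl hτ'.le) (h2c.mem_y' 0 le_rfl hτ'.le)
        have hm3 : 𝓑.Mem (γ - α) ((RP.X t - RP.X τ) • (G (y₁ τ) - G (y₁ s))) :=
          𝓑.mem_smul _ _ _ (𝓑.mem_sub _ _ _ (h1c.mem_y' τ hτ.le le_rfl) (h1c.mem_y' s hs hsτ))
        refine le_trans (𝓑.N_add3 _ _ _ _ hm1 hm2 hm3) ?_
        have hb1 := hC₁r s τ hs hsτ le_rfl
        have hb2 := hC₂r 0 (t - τ) le_rfl (by linarith) ht2
        rw [sub_zero] at hb2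
        have hp1 : (τ - s) ^ α ≤ (t - s) ^ α := hr1 _ _ (by linarith) (by linarith)
        have hp2 : (t - τ) ^ α ≤ (t - s) ^ α := hr1 _ _ (by linarith) (by linarith)
        have hq1 : (0:ℝ) ≤ (τ - s) ^ α := Real.rpow_nonneg (by linarith) _
        have hq2 : (0:ℝ) ≤ (t - τ) ^ α := Real.rpow_nonneg (by linarith) _
        have hcr : 𝓑.N (γ - α) ((RP.X t - RP.X τ) • (G (y₁ τ) - G (y₁ s)))
            ≤ CX * (2 * Mg) * (t - s) ^ α := by
          rw [𝓑.N_smul]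
          have hx := hCX τ t hτ.le hτt.le htT
          have hgb : 𝓑.N (γ - α) (G (y₁ τ) - G (y₁ s)) ≤ 2 * Mg := by
            refine le_trans (𝓑.N_sub_le _ _ _ (h1c.mem_y' τ hτ.le le_rfl)
              (h1c.mem_y' s hs hsτ)) ?_
            have u1 : 𝓑.N (γ - α) (G (y₁ τ)) ≤ Mg := by
              rw [← hy_left τ le_rfl]; exact hMg τ hτ.le (by linarith)
            have u2 : 𝓑.N (γ - α) (G (y₁ s)) ≤ Mg := by
              rw [← hy_left s hsτ]; exact hMg s hs (by linarith)
            linarith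
          calc |RP.X t - RP.X τ| * 𝓑.N (γ - α) (G (y₁ τ) - G (y₁ s))
              ≤ (CX * (t - τ) ^ α) * (2 * Mg) :=
                mul_le_mul hx hgb (𝓑.N_nonneg _ _) (mul_nonneg hCX0 hq2)
            _ ≤ (CX * (t - s) ^ α) * (2 * Mg) := by
                apply mul_le_mul_of_nonneg_right _ (by linarith)
                exact mul_le_mul_of_nonneg_left hp2 hCX0
            _ = CX * (2 * Mg) * (t - s) ^ α := by ring
        have e1 : C₁r * (τ - s) ^ α ≤ max C₁r 0 * (t - s) ^ α :=
          le_trans (mul_le_mul_of_nonneg_right (le_max_left _ _) hq1)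
            (mul_le_mul_of_nonneg_left hp1 (le_max_right _ _))
        have e2 : C₂r * (t - τ) ^ α ≤ max C₂r 0 * (t - s) ^ α :=
          le_trans (mul_le_mul_of_nonneg_right (le_max_left _ _) hq2)
            (mul_le_mul_of_nonneg_left hp2 (le_max_right _ _))
        rw [add_mul, add_mul]
        linarith
      · have hsτ' : τ < s := not_le.mp hsτ
        rw [kid2 s t hsτ' hst]
        have hb := hC₂r (s - τ) (t - τ) (by linarith) (by linarith)
          (by linarith)
        rw [show t - τ - (s - τ) = t - s from by ring] at hb
        refine hb.trans ?_
        apply mul_le_mul_of_nonneg_right _ hpow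
        have := le_max_left C₂r 0
        have := le_max_right C₁r (0:ℝ)
        linarith
  have hrem2 : ∃ C : ℝ, ∀ s t : ℝ, 0 ≤ s → s ≤ t → t ≤ (τ + τ') →
      𝓑.N (γ - 2 * α) (gubRemainder 𝓑 RP.X y (fun r => G (y r)) s t)
        ≤ C * (t - s) ^ (2 * α) := by
    obtain ⟨C₁r, hC₁r⟩ := h1c.rem_two_alpha
    obtain ⟨C₂r, hC₂r⟩ := h2c.rem_two_alpha
    obtain ⟨C₁h, hC₁h⟩ := h1c.holder_y'
    refine ⟨max C₁r 0 + max C₂r 0 + CX * max C₁h 0, ?_⟩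
    intro s t hs hst htT
    have hpow : (0:ℝ) ≤ (t - s) ^ (2 * α) := Real.rpow_nonneg (by linarith) _
    have hcr0 : (0:ℝ) ≤ CX * max C₁h 0 := mul_nonneg hCX0 (le_max_right _ _)
    by_cases ht : t ≤ τ
    · rw [kid1 s t (hst.trans ht) ht]
      refine (hC₁r s t hs hst ht).trans ?_
      apply mul_le_mul_of_nonneg_right _ hpow
      have := le_max_left C₁r 0
      have := le_max_right C₂r (0:ℝ)
      linarith
    · by_cases hsτ : s ≤ τ
      · have hτt : τ < t := not_le.mp ht
        have ht2 : t - τ ≤ τ' := by linarith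
        rw [kid s t hs hsτ hτt]
        have hm1 := memgub RP.X y₁ (fun r => G (y₁ r)) (γ - 2 * α) hlev1 s τ
          (h1c.mem_y τ hτ.le le_rfl) (h1c.mem_y s hs hsτ) (h1c.mem_y' s hs hsτ)
        have hm2 := memgub (fun v => RP.X (τ + v) - RP.X τ) y₂ (fun r => G (y₂ r)) (γ - 2 * α)
          hlev1 0 (t - τ) (h2c.mem_y (t - τ) (by linarith) ht2)
          (h2c.mem_y 0 le_rfl hτ'.le) (h2c.mem_y' 0 le_rfl hτ'.le)
        have hm3 : 𝓑.Mem (γ - 2 * α) ((RP.X t - RP.X τ) • (G (y₁ τ) - G (y₁ s))) :=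
          𝓑.mem_smul _ _ _ (𝓑.mem_sub _ _ _
            (𝓑.mem_mono hlev1 _ (h1c.mem_y' τ hτ.le le_rfl))
            (𝓑.mem_mono hlev1 _ (h1c.mem_y' s hs hsτ)))
        refine le_trans (𝓑.N_add3 _ _ _ _ hm1 hm2 hm3) ?_
        have hb1 := hC₁r s τ hs hsτ le_rfl
        have hb2 := hC₂r 0 (t - τ) le_rfl (by linarith) ht2
        rw [sub_zero] at hb2
        have hp1 : (τ - s) ^ (2 * α) ≤ (t - s) ^ (2 * α) := hr2 _ _ (by linarith) (by linarith)
        have hp2 : (t - τ) ^ (2 * α) ≤ (t - s) ^ (2 * α) := hr2 _ _ (by linarith) (by linarith)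
        have hq1 : (0:ℝ) ≤ (τ - s) ^ (2 * α) := Real.rpow_nonneg (by linarith) _
        have hq2 : (0:ℝ) ≤ (t - τ) ^ (2 * α) := Real.rpow_nonneg (by linarith) _
        have hq1' : (0:ℝ) ≤ (τ - s) ^ α := Real.rpow_nonneg (by linarith) _
        have hq2' : (0:ℝ) ≤ (t - τ) ^ α := Real.rpow_nonneg (by linarith) _
        have hp1' : (τ - s) ^ α ≤ (t - s) ^ α := hr1 _ _ (by linarith) (by linarith)
        have hp2' : (t - τ) ^ α ≤ (t - s) ^ α := hr1 _ _ (by linarith) (by linarith)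
        have hcr : 𝓑.N (γ - 2 * α) ((RP.X t - RP.X τ) • (G (y₁ τ) - G (y₁ s)))
            ≤ CX * max C₁h 0 * (t - s) ^ (2 * α) := by
          rw [𝓑.N_smul]
          have hx := hCX τ t hτ.le hτt.le htT
          have hgb : 𝓑.N (γ - 2 * α) (G (y₁ τ) - G (y₁ s)) ≤ max C₁h 0 * (τ - s) ^ α :=
            (hC₁h s τ hs hsτ le_rfl).trans
              (mul_le_mul_of_nonneg_right (le_max_left _ _) hq1')
          calc |RP.X t - RP.X τ| * 𝓑.N (γ - 2 * α) (G (y₁ τ) - G (y₁ s))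
              ≤ (CX * (t - τ) ^ α) * (max C₁h 0 * (τ - s) ^ α) :=
                mul_le_mul hx hgb (𝓑.N_nonneg _ _) (mul_nonneg hCX0 hq2')
            _ ≤ (CX * (t - s) ^ α) * (max C₁h 0 * (t - s) ^ α) := by
                apply mul_le_mul (mul_le_mul_of_nonneg_left hp2' hCX0)
                  (mul_le_mul_of_nonneg_left hp1' (le_max_right _ _))
                  (mul_nonneg (le_max_right _ _) hq1')
                  (mul_nonneg hCX0 (Real.rpow_nonneg (by linarith) _))
            _ = CX * max C₁h 0 * ((t - s) ^ α * (t - s) ^ α) := by ring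
            _ = CX * max C₁h 0 * (t - s) ^ (2 * α) := by
                rw [hrsplit (t - s) (by linarith)]
        have e1 : C₁r * (τ - s) ^ (2 * α) ≤ max C₁r 0 * (t - s) ^ (2 * α) :=
          le_trans (mul_le_mul_of_nonneg_right (le_max_left _ _) hq1)
            (mul_le_mul_of_nonneg_left hp1 (le_max_right _ _))
        have e2 : C₂r * (t - τ) ^ (2 * α) ≤ max C₂r 0 * (t - s) ^ (2 * α) :=
          le_trans (mul_le_mul_of_nonneg_right (le_max_left _ _) hq2)
            (mul_le_mul_of_nonneg_left hp2 (le_max_right _ _))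
        rw [add_mul, add_mul]
        linarith
      · have hsτ' : τ < s := not_le.mp hsτ
        rw [kid2 s t hsτ' hst]
        have hb := hC₂r (s - τ) (t - τ) (by linarith) (by linarith)
          (by linarith)
        rw [show t - τ - (s - τ) = t - s from by ring] at hb
        refine hb.trans ?_
        apply mul_le_mul_of_nonneg_right _ hpow
        have := le_max_left C₂r 0
        have := le_max_right C₁r (0:ℝ)
        linarith
  have hcp : IsControlledPath 𝓑 α γ (τ + τ') RP.X y (fun t => G (y t)) :=
    ⟨hmem_y, hmem_y', hcont_y, hcont_y', hhol, hrema, hrem2⟩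
  refine ⟨hcp, ?_, ?_⟩
  · show y 0 = y₀
    rw [hy_left 0 hτ.le]; exact h1.init
  -- constants for the mild formulation
  obtain ⟨CF₀, hCF₀⟩ := hF.linGrowth
  set CF : ℝ := max CF₀ 0 with hCFdef
  have hCF0 : (0:ℝ) ≤ CF := le_max_right _ _
  have hCF : ∀ x : 𝓑.E, 𝓑.Mem γ x → 𝓑.N (γ - δ) (F x) ≤ CF * (1 + 𝓑.N γ x) := by
    intro x hx
    refine (hCF₀ x hx).trans (mul_le_mul_of_nonneg_right (le_max_left _ _) ?_)
    have := 𝓑.N_nonneg γ x; linarith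
  obtain ⟨CSγ, hCSγ0, hCSγ⟩ := Sg.S_bounded γ (τ + τ') hT0
  obtain ⟨CS2, hCS20, hCS2⟩ := Sg.S_bounded (γ - 2 * α) (τ + τ') hT0
  obtain ⟨Csm, hCsm0, hCsm⟩ := Sg.S_smoothing (γ - δ) δ (τ + τ') hδ hδ'.le hT0
  have hγδ : γ - δ + δ = γ := by ring
  obtain ⟨CDG₀, hCDG₀⟩ := hG.DG_bound α hαmem
  set CDG : ℝ := max CDG₀ 0 with hCDGdef
  have hCDG0 : (0:ℝ) ≤ CDG := le_max_right _ _
  have hCDG : ∀ x h : 𝓑.E, 𝓑.Mem (γ - α) x → 𝓑.Mem (γ - α) h →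
      𝓑.N (γ - α - σ) (DG x h) ≤ CDG * 𝓑.N (γ - α) h := by
    intro x h hx hh
    exact (hCDG₀ x h hx hh).trans
      (mul_le_mul_of_nonneg_right (le_max_left _ _) (𝓑.N_nonneg _ _))
  obtain ⟨Cem, hCem0, hCem⟩ := 𝓑.embed_bound hlev1
  obtain ⟨Cem2, hCem20, hCem2⟩ := 𝓑.embed_bound hlev4
  -- derived pointwise bounds
  have hGmem2 : ∀ s : ℝ, 0 ≤ s → s ≤ τ + τ' → 𝓑.Mem (γ - 2 * α) (G (y s)) :=
    fun s h0 hT' => 𝓑.mem_mono hlev1 _ (hmem_y' s h0 hT')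
  have hGbd2 : ∀ s : ℝ, 0 ≤ s → s ≤ τ + τ' → 𝓑.N (γ - 2 * α) (G (y s)) ≤ Cem * Mg := by
    intro s h0 hT'
    exact (hCem _ (hmem_y' s h0 hT')).trans
      (mul_le_mul_of_nonneg_left (hMg s h0 hT') hCem0.le)
  have hzmemσ : ∀ s : ℝ, 0 ≤ s → s ≤ τ + τ' → 𝓑.Mem (γ - α - σ) (DG (y s) (G (y s))) :=
    fun s h0 hT' => hG.DG_maps α hαmem (y s) (G (y s))
      (𝓑.mem_mono hlev2 _ (hmem_y s h0 hT')) (hmem_y' s h0 hT')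
  have hzmem : ∀ s : ℝ, 0 ≤ s → s ≤ τ + τ' → 𝓑.Mem (γ - 2 * α) (DG (y s) (G (y s))) :=
    fun s h0 hT' => 𝓑.mem_mono hlev4 _ (hzmemσ s h0 hT')
  have hzbd : ∀ s : ℝ, 0 ≤ s → s ≤ τ + τ' →
      𝓑.N (γ - 2 * α) (DG (y s) (G (y s))) ≤ Cem2 * (CDG * Mg) := by
    intro s h0 hT'
    refine (hCem2 _ (hzmemσ s h0 hT')).trans ?_
    apply mul_le_mul_of_nonneg_left _ hCem20.le
    refine (hCDG (y s) (G (y s)) (𝓑.mem_mono hlev2 _ (hmem_y s h0 hT'))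
      (hmem_y' s h0 hT')).trans ?_
    exact mul_le_mul_of_nonneg_left (hMg s h0 hT') hCDG0
  -- X2 vanishes on the diagonal
  have hX2ττ : RP.X2 τ τ = 0 := by
    obtain ⟨C2, hC2⟩ := RP.holderX2
    have h5 := hC2 τ τ hτ.le le_rfl (by linarith)
    rw [sub_self, Real.zero_rpow (by positivity)] at h5
    have h6 : |RP.X2 τ τ| ≤ 0 := by linarith
    exact abs_eq_zero.mp (le_antisymm h6 (abs_nonneg _))
  -- the mild formulation
  intro t ht0 htT
  by_cases htτ : t ≤ τ
  · -- t ≤ τ : the solution is still governed by y₁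
    obtain ⟨D, Z, hD, hZ, heq⟩ := h1.mild t ht0 htτ
    have hagree : ∀ i : ℕ, ∀ π : RPartition 0 t, i < π.n → π.t i ≤ τ := by
      intro i π hi
      have h5 := π.t_lt π.n le_rfl i hi
      rw [π.last] at h5
      have h6 := (π.t_mem hi.le).1
      linarith
    refine ⟨D, Z, ⟨hD.1, ?_⟩, ⟨hZ.1, ?_⟩, ?_⟩
    · intro ε hε
      obtain ⟨d, hd, hp⟩ := hD.2 ε hε
      refine ⟨d, hd, ?_⟩
      intro π hπ
      have hsum : intRiemannSum 𝓑 (fun s => Sg.S (t - s) (F (y s))) π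
          = intRiemannSum 𝓑 (fun s => Sg.S (t - s) (F (y₁ s))) π := by
        unfold intRiemannSum
        dsimp only
        apply Finset.sum_congr rfl
        intro i hi
        rw [hy_left (π.t i) (hagree i π (Finset.mem_range.mp hi))]
      rw [hsum]
      exact hp π hπ
    · intro ε hε
      obtain ⟨d, hd, hp⟩ := hZ.2 ε hε
      refine ⟨d, hd, ?_⟩
      intro π hπ
      have hsum : convRiemannSum 𝓑 Sg RP.X RP.X2 (fun s => G (y s))
            (fun s => DG (y s) (G (y s))) π
          = convRiemannSum 𝓑 Sg RP.X RP.X2 (fun s => G (y₁ s))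
            (fun s => DG (y₁ s) (G (y₁ s))) π := by
        unfold convRiemannSum
        dsimp only
        apply Finset.sum_congr rfl
        intro i hi
        rw [hy_left (π.t i) (hagree i π (Finset.mem_range.mp hi))]
      rw [hsum]
      exact hp π hπ
    · show y t = Sg.S t y₀ + D + Z
      rw [hy_left t htτ]
      exact heq
  · -- t > τ : split at τ
    have hτt : τ < t := not_le.mp htτ
    have ht'0 : (0:ℝ) < t - τ := by linarith
    have ht'τ' : t - τ ≤ τ' := by linarith
    obtain ⟨D₁, Z₁, hD₁, hZ₁, heq₁⟩ := h1.mild τ hτ le_rfl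
    obtain ⟨D₂, Z₂, hD₂, hZ₂, heq₂⟩ := h2.mild (t - τ) ht'0 ht'τ'
    refine ⟨Sg.S (t - τ) D₁ + D₂, Sg.S (t - τ) Z₁ + Z₂, ⟨?_, ?_⟩, ⟨?_, ?_⟩, ?_⟩
    · exact 𝓑.mem_add γ _ _ (Sg.S_mem (t - τ) γ D₁ ht'0.le hD₁.1) hD₂.1
    · -- the Riemann integral over [0, t]
      intro ε hε
      -- uniform bound on the integrand coming from the left part
      obtain ⟨K, hK0, hKb⟩ : ∃ K : ℝ, 0 ≤ K ∧ ∀ a : ℝ, 0 ≤ a → a ≤ τ →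
          𝓑.Mem γ (Sg.S (t - a) (F (y₁ a))) ∧
          𝓑.N γ (Sg.S (t - a) (F (y₁ a))) ≤ K := by
        refine ⟨Csm * (t - τ) ^ (-δ) * (CF * (1 + My)), ?_, ?_⟩
        · have h7 : (0:ℝ) ≤ (t - τ) ^ (-δ) := Real.rpow_nonneg ht'0.le _
          have h8 : (0:ℝ) ≤ CF * (1 + My) := mul_nonneg hCF0 (by linarith)
          exact mul_nonneg (mul_nonneg hCsm0.le h7) h8
        · intro a h0a haτ
          have hposa : 0 < t - a := by linarith
          have hta : t - a ≤ τ + τ' := by linarith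
          have hmem := h1c.mem_y a h0a haτ
          have hFmem := hF.maps _ hmem
          have hsm := hCsm (t - a) (F (y₁ a)) hposa hta hFmem
          rw [hγδ] at hsm
          refine ⟨hsm.1, hsm.2.trans ?_⟩
          have hb1 : (t - a) ^ (-δ) ≤ (t - τ) ^ (-δ) :=
            Real.rpow_le_rpow_of_nonpos ht'0 (by linarith) (by linarith)
          have hb2 : 𝓑.N (γ - δ) (F (y₁ a)) ≤ CF * (1 + My) := by
            refine (hCF _ hmem).trans (mul_le_mul_of_nonneg_left ?_ hCF0)
            have h9 : 𝓑.N γ (y₁ a) ≤ My := by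
              rw [← hy_left a haτ]; exact hMy a h0a (by linarith)
            linarith
          calc Csm * (t - a) ^ (-δ) * 𝓑.N (γ - δ) (F (y₁ a))
              ≤ Csm * (t - τ) ^ (-δ) * 𝓑.N (γ - δ) (F (y₁ a)) := by
                apply mul_le_mul_of_nonneg_right _ (𝓑.N_nonneg _ _)
                exact mul_le_mul_of_nonneg_left hb1 hCsm0.le
            _ ≤ Csm * (t - τ) ^ (-δ) * (CF * (1 + My)) := by
                apply mul_le_mul_of_nonneg_left hb2
                exact mul_nonneg hCsm0.le (Real.rpow_nonneg ht'0.le _)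
      obtain ⟨d₁, hd₁, hp₁⟩ := hD₁.2 (ε / (3 * CSγ)) (div_pos hε (by linarith))
      obtain ⟨d₂, hd₂, hp₂⟩ := hD₂.2 (ε / 3) (div_pos hε (by norm_num))
      refine ⟨min d₁ (min d₂ (ε / (3 * (2 * K + 1)))),
        lt_min hd₁ (lt_min hd₂ (div_pos hε (by linarith))), ?_⟩
      intro π hπ
      have hπ1 : π.mesh < d₁ := hπ.trans_le (min_le_left _ _)
      have hπ2 : π.mesh < d₂ := hπ.trans_le ((min_le_right _ _).trans (min_le_left _ _))
      have hπ3 : π.mesh < ε / (3 * (2 * K + 1)) :=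
        hπ.trans_le ((min_le_right _ _).trans (min_le_right _ _))
      obtain ⟨π₁, π₂, u, w, hm₁, hm₂, hu0, huτ, hτw, hwt, hwu, hsum⟩ :=
        split_sum hτ hτt π (fun a b => (b - a) • Sg.S (t - a) (F (y a))) (by simp)
      have hsum' : intRiemannSum 𝓑 (fun s => Sg.S (t - s) (F (y s))) π
          = (∑ i ∈ Finset.range π₁.n,
              (π₁.t (i + 1) - π₁.t i) • Sg.S (t - π₁.t i) (F (y (π₁.t i))))
            + (∑ i ∈ Finset.range π₂.n,
              ((τ + π₂.t (i + 1)) - (τ + π₂.t i)) • Sg.S (t - (τ + π₂.t i))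
                (F (y (τ + π₂.t i))))
            + ((w - u) • Sg.S (t - u) (F (y u)) - (τ - u) • Sg.S (t - u) (F (y u))
              - (w - τ) • Sg.S (t - τ) (F (y τ))) := by
        simpa [intRiemannSum] using hsum
      have hA : (∑ i ∈ Finset.range π₁.n,
            (π₁.t (i + 1) - π₁.t i) • Sg.S (t - π₁.t i) (F (y (π₁.t i))))
          = Sg.S (t - τ) (intRiemannSum 𝓑 (fun s => Sg.S (τ - s) (F (y₁ s))) π₁) := by
        have hterm : ∀ i ∈ Finset.range π₁.n,
            (π₁.t (i + 1) - π₁.t i) • Sg.S (t - π₁.t i) (F (y (π₁.t i)))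
              = Sg.S (t - τ) ((π₁.t (i + 1) - π₁.t i) •
                  Sg.S (τ - π₁.t i) (F (y₁ (π₁.t i)))) := by
          intro i hi
          have hi' := Finset.mem_range.mp hi
          have h0i : 0 ≤ π₁.t i := (π₁.t_mem hi'.le).1
          have hiτ : π₁.t i ≤ τ := (π₁.t_mem hi'.le).2
          rw [map_smul, hy_left _ hiτ,
            show t - π₁.t i = (t - τ) + (τ - π₁.t i) from by ring,
            Sg.S_comp (t - τ) (τ - π₁.t i) ht'0.le (by linarith) _]
        rw [Finset.sum_congr rfl hterm, intRiemannSum]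
        exact (map_sum (Sg.S (t - τ)) (fun i => (π₁.t (i + 1) - π₁.t i) •
          Sg.S (τ - π₁.t i) (F (y₁ (π₁.t i)))) (Finset.range π₁.n)).symm
      have hB : (∑ i ∈ Finset.range π₂.n,
            ((τ + π₂.t (i + 1)) - (τ + π₂.t i)) • Sg.S (t - (τ + π₂.t i))
              (F (y (τ + π₂.t i))))
          = intRiemannSum 𝓑 (fun s => Sg.S (t - τ - s) (F (y₂ s))) π₂ := by
        unfold intRiemannSum
        apply Finset.sum_congr rfl
        intro i hi
        have hi' := Finset.mem_range.mp hi
        have h0i : 0 ≤ π₂.t i := (π₂.t_mem hi'.le).1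
        rw [hy_right _ h0i, show (τ + π₂.t (i + 1)) - (τ + π₂.t i)
            = π₂.t (i + 1) - π₂.t i from by ring,
          show t - (τ + π₂.t i) = t - τ - π₂.t i from by ring]
      rw [hsum', hA, hB]
      -- memberships of the three pieces
      have hmemI₁ : 𝓑.Mem γ (intRiemannSum 𝓑 (fun s => Sg.S (τ - s) (F (y₁ s))) π₁) := by
        apply 𝓑.mem_finsum
        intro i hi
        have hi' := Finset.mem_range.mp hi
        have h0i : 0 ≤ π₁.t i := (π₁.t_mem hi'.le).1
        have hiτ : π₁.t i < τ := by
          have h5 := π₁.t_lt π₁.n le_rfl i hi'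
          rwa [π₁.last] at h5
        apply 𝓑.mem_smul
        have hsm := hCsm (τ - π₁.t i) (F (y₁ (π₁.t i))) (by linarith) (by linarith)
          (hF.maps _ (h1c.mem_y _ h0i hiτ.le))
        rw [hγδ] at hsm
        exact hsm.1
      have hmemI₂ : 𝓑.Mem γ (intRiemannSum 𝓑 (fun s => Sg.S (t - τ - s) (F (y₂ s))) π₂) := by
        apply 𝓑.mem_finsum
        intro i hi
        have hi' := Finset.mem_range.mp hi
        have h0i : 0 ≤ π₂.t i := (π₂.t_mem hi'.le).1
        have hit' : π₂.t i < t - τ := by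
          have h5 := π₂.t_lt π₂.n le_rfl i hi'
          rwa [π₂.last] at h5
        apply 𝓑.mem_smul
        have hsm := hCsm (t - τ - π₂.t i) (F (y₂ (π₂.t i))) (by linarith) (by linarith)
          (hF.maps _ (h2c.mem_y _ h0i (by linarith)))
        rw [hγδ] at hsm
        exact hsm.1
      have herr_eq : (w - u) • Sg.S (t - u) (F (y u)) - (τ - u) • Sg.S (t - u) (F (y u))
            - (w - τ) • Sg.S (t - τ) (F (y τ))
          = (w - τ) • (Sg.S (t - u) (F (y₁ u)) - Sg.S (t - τ) (F (y₁ τ))) := by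
        rw [hy_left u huτ, hy_left τ le_rfl]
        module
      have hrearr : Sg.S (t - τ) (intRiemannSum 𝓑 (fun s => Sg.S (τ - s) (F (y₁ s))) π₁)
            + intRiemannSum 𝓑 (fun s => Sg.S (t - τ - s) (F (y₂ s))) π₂
            + ((w - u) • Sg.S (t - u) (F (y u)) - (τ - u) • Sg.S (t - u) (F (y u))
              - (w - τ) • Sg.S (t - τ) (F (y τ)))
            - (Sg.S (t - τ) D₁ + D₂)
          = Sg.S (t - τ) (intRiemannSum 𝓑 (fun s => Sg.S (τ - s) (F (y₁ s))) π₁ - D₁)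
            + (intRiemannSum 𝓑 (fun s => Sg.S (t - τ - s) (F (y₂ s))) π₂ - D₂)
            + (w - τ) • (Sg.S (t - u) (F (y₁ u)) - Sg.S (t - τ) (F (y₁ τ))) := by
        rw [map_sub, herr_eq]
        abel
      rw [hrearr]
      -- memberships for the triangle inequality
      have hKu := hKb u hu0 huτ
      have hKτ := hKb τ hτ.le le_rfl
      have hm3 : 𝓑.Mem γ ((w - τ) • (Sg.S (t - u) (F (y₁ u)) - Sg.S (t - τ) (F (y₁ τ)))) :=
        𝓑.mem_smul _ _ _ (𝓑.mem_sub _ _ _ hKu.1 hKτ.1)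
      have hm1 : 𝓑.Mem γ (Sg.S (t - τ)
          (intRiemannSum 𝓑 (fun s => Sg.S (τ - s) (F (y₁ s))) π₁ - D₁)) :=
        Sg.S_mem _ _ _ ht'0.le (𝓑.mem_sub _ _ _ hmemI₁ hD₁.1)
      have hm2 : 𝓑.Mem γ (intRiemannSum 𝓑 (fun s => Sg.S (t - τ - s) (F (y₂ s))) π₂ - D₂) :=
        𝓑.mem_sub _ _ _ hmemI₂ hD₂.1
      refine le_trans (𝓑.N_add3 _ _ _ _ hm1 hm2 hm3) ?_
      -- bound the three pieces
      have hb1 : 𝓑.N γ (Sg.S (t - τ)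
          (intRiemannSum 𝓑 (fun s => Sg.S (τ - s) (F (y₁ s))) π₁ - D₁)) ≤ ε / 3 := by
        refine (hCSγ (t - τ) _ ht'0.le (by linarith) (𝓑.mem_sub _ _ _ hmemI₁ hD₁.1)).trans ?_
        have h5 := hp₁ π₁ (lt_of_le_of_lt hm₁ hπ1)
        calc CSγ * 𝓑.N γ (intRiemannSum 𝓑 (fun s => Sg.S (τ - s) (F (y₁ s))) π₁ - D₁)
            ≤ CSγ * (ε / (3 * CSγ)) := mul_le_mul_of_nonneg_left h5 hCSγ0.le
          _ = ε / 3 := by field_simp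
      have hb2 : 𝓑.N γ (intRiemannSum 𝓑 (fun s => Sg.S (t - τ - s) (F (y₂ s))) π₂ - D₂)
          ≤ ε / 3 := hp₂ π₂ (lt_of_le_of_lt hm₂ hπ2)
      have hb3 : 𝓑.N γ ((w - τ) • (Sg.S (t - u) (F (y₁ u)) - Sg.S (t - τ) (F (y₁ τ))))
          ≤ ε / 3 := by
        rw [𝓑.N_smul]
        have h5 : 𝓑.N γ (Sg.S (t - u) (F (y₁ u)) - Sg.S (t - τ) (F (y₁ τ))) ≤ 2 * K := by
          refine (𝓑.N_sub_le _ _ _ hKu.1 hKτ.1).trans ?_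
          linarith [hKu.2, hKτ.2]
        have h6 : |w - τ| ≤ π.mesh := by
          rw [abs_of_nonneg (by linarith)]; linarith
        calc |w - τ| * 𝓑.N γ (Sg.S (t - u) (F (y₁ u)) - Sg.S (t - τ) (F (y₁ τ)))
            ≤ π.mesh * (2 * K) :=
              mul_le_mul h6 h5 (𝓑.N_nonneg _ _) π.mesh_pos.le
          _ ≤ π.mesh * (2 * K + 1) := by
              apply mul_le_mul_of_nonneg_left _ π.mesh_pos.le
              linarith
          _ ≤ (ε / (3 * (2 * K + 1))) * (2 * K + 1) := by
              apply mul_le_mul_of_nonneg_right hπ3.le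
              linarith
          _ = ε / 3 := by field_simp
      linarith
    · exact 𝓑.mem_add _ _ _ (Sg.S_mem (t - τ) _ Z₁ ht'0.le hZ₁.1) hZ₂.1
    · -- the rough convolution over [0, t]
      intro ε hε
      set KZ : ℝ := 3 * CS2 * (CX * (Cem * Mg) + CX2 * (τ + τ') ^ α * (Cem2 * (CDG * Mg)))
        with hKZdef
      have hTα0 : (0:ℝ) ≤ (τ + τ') ^ α := Real.rpow_nonneg hT0.le _
      have hMgE0 : (0:ℝ) ≤ Cem * Mg := mul_nonneg hCem0.le hMg0
      have hMz0 : (0:ℝ) ≤ Cem2 * (CDG * Mg) :=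
        mul_nonneg hCem20.le (mul_nonneg hCDG0 hMg0)
      have hKZ0 : (0:ℝ) ≤ KZ := by
        rw [hKZdef]
        have e1 : (0:ℝ) ≤ CX * (Cem * Mg) := mul_nonneg hCX0 hMgE0
        have e2 : (0:ℝ) ≤ CX2 * (τ + τ') ^ α * (Cem2 * (CDG * Mg)) :=
          mul_nonneg (mul_nonneg hCX20 hTα0) hMz0
        have e3 : (0:ℝ) ≤ 3 * CS2 := by linarith
        exact mul_nonneg e3 (by linarith)
      obtain ⟨d₁, hd₁, hp₁⟩ := hZ₁.2 (ε / (3 * CS2)) (div_pos hε (by linarith))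
      obtain ⟨d₂, hd₂, hp₂⟩ := hZ₂.2 (ε / 3) (div_pos hε (by norm_num))
      have hε'0 : (0:ℝ) < ε / (3 * (KZ + 1)) := div_pos hε (by linarith)
      refine ⟨min d₁ (min d₂ ((ε / (3 * (KZ + 1))) ^ α⁻¹)),
        lt_min hd₁ (lt_min hd₂ (Real.rpow_pos_of_pos hε'0 _)), ?_⟩
      intro π hπ
      have hπ1 : π.mesh < d₁ := hπ.trans_le (min_le_left _ _)
      have hπ2 : π.mesh < d₂ := hπ.trans_le ((min_le_right _ _).trans (min_le_left _ _))
      have hπ3 : π.mesh < (ε / (3 * (KZ + 1))) ^ α⁻¹ :=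
        hπ.trans_le ((min_le_right _ _).trans (min_le_right _ _))
      have hmeshα : π.mesh ^ α < ε / (3 * (KZ + 1)) := by
        have h7 := Real.rpow_lt_rpow π.mesh_pos.le hπ3 hα0
        have h8 : ((ε / (3 * (KZ + 1))) ^ α⁻¹) ^ α = ε / (3 * (KZ + 1)) := by
          rw [← Real.rpow_mul hε'0.le, inv_mul_cancel₀ hα0.ne', Real.rpow_one]
        rwa [h8] at h7
      have hmesh0 : (0:ℝ) ≤ π.mesh ^ α := Real.rpow_nonneg π.mesh_pos.le _
      obtain ⟨π₁, π₂, u, w, hm₁, hm₂, hu0, huτ, hτw, hwt, hwu, hsum⟩ :=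
        split_sum hτ hτt π (fun a b => Sg.S (t - a) ((RP.X b - RP.X a) • G (y a)
          + RP.X2 a b • DG (y a) (G (y a)))) (by simp [hX2ττ])
      -- per-term bound
      have hterm : ∀ a b : ℝ, 0 ≤ a → a ≤ b → a ≤ τ → b ≤ t → b - a ≤ π.mesh →
          𝓑.Mem (γ - 2 * α) (Sg.S (t - a) ((RP.X b - RP.X a) • G (y a)
            + RP.X2 a b • DG (y a) (G (y a)))) ∧
          𝓑.N (γ - 2 * α) (Sg.S (t - a) ((RP.X b - RP.X a) • G (y a)
            + RP.X2 a b • DG (y a) (G (y a))))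
            ≤ CS2 * (CX * π.mesh ^ α * (Cem * Mg)
              + CX2 * ((τ + τ') ^ α * π.mesh ^ α) * (Cem2 * (CDG * Mg))) := by
        intro a b h0a hab haτ hbt hbm
        have haT : a ≤ τ + τ' := by linarith
        have hbT : b ≤ τ + τ' := by linarith
        have hmem1 : 𝓑.Mem (γ - 2 * α) ((RP.X b - RP.X a) • G (y a)) :=
          𝓑.mem_smul _ _ _ (hGmem2 a h0a haT)
        have hmem2 : 𝓑.Mem (γ - 2 * α) (RP.X2 a b • DG (y a) (G (y a))) :=
          𝓑.mem_smul _ _ _ (hzmem a h0a haT)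
        have hmem_inner := 𝓑.mem_add _ _ _ hmem1 hmem2
        have htime0 : 0 ≤ t - a := by linarith
        have htimeT : t - a ≤ τ + τ' := by linarith
        refine ⟨Sg.S_mem _ _ _ htime0 hmem_inner, ?_⟩
        refine (hCS2 (t - a) _ htime0 htimeT hmem_inner).trans ?_
        apply mul_le_mul_of_nonneg_left _ hCS20.le
        refine le_trans (𝓑.N_add _ _ _ hmem1 hmem2) ?_
        rw [𝓑.N_smul, 𝓑.N_smul]
        have hpow1 : (0:ℝ) ≤ (b - a) ^ α := Real.rpow_nonneg (by linarith) _
        have hmono1 : (b - a) ^ α ≤ π.mesh ^ α := hr1 _ _ (by linarith) hbm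
        have e1 : |RP.X b - RP.X a| * 𝓑.N (γ - 2 * α) (G (y a))
            ≤ CX * π.mesh ^ α * (Cem * Mg) := by
          calc |RP.X b - RP.X a| * 𝓑.N (γ - 2 * α) (G (y a))
              ≤ (CX * (b - a) ^ α) * (Cem * Mg) :=
                mul_le_mul (hCX a b h0a hab hbT) (hGbd2 a h0a haT) (𝓑.N_nonneg _ _)
                  (mul_nonneg hCX0 hpow1)
            _ ≤ (CX * π.mesh ^ α) * (Cem * Mg) :=
                mul_le_mul_of_nonneg_right (mul_le_mul_of_nonneg_left hmono1 hCX0) hMgE0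
        have e2 : |RP.X2 a b| * 𝓑.N (γ - 2 * α) (DG (y a) (G (y a)))
            ≤ CX2 * ((τ + τ') ^ α * π.mesh ^ α) * (Cem2 * (CDG * Mg)) := by
          have hsp : (b - a) ^ (2 * α) ≤ (τ + τ') ^ α * π.mesh ^ α := by
            rw [hrsplit (b - a) (by linarith)]
            exact mul_le_mul (hr1 _ _ (by linarith) (by linarith)) hmono1 hpow1 hTα0
          calc |RP.X2 a b| * 𝓑.N (γ - 2 * α) (DG (y a) (G (y a)))
              ≤ (CX2 * (b - a) ^ (2 * α)) * (Cem2 * (CDG * Mg)) :=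
                mul_le_mul (hCX2 a b h0a hab hbT) (hzbd a h0a haT) (𝓑.N_nonneg _ _)
                  (mul_nonneg hCX20 (Real.rpow_nonneg (by linarith) _))
            _ ≤ (CX2 * ((τ + τ') ^ α * π.mesh ^ α)) * (Cem2 * (CDG * Mg)) :=
                mul_le_mul_of_nonneg_right (mul_le_mul_of_nonneg_left hsp hCX20) hMz0
        linarith
      have hsum' : convRiemannSum 𝓑 Sg RP.X RP.X2 (fun s => G (y s))
            (fun s => DG (y s) (G (y s))) π
          = (∑ i ∈ Finset.range π₁.n, Sg.S (t - π₁.t i)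
              ((RP.X (π₁.t (i + 1)) - RP.X (π₁.t i)) • G (y (π₁.t i))
                + RP.X2 (π₁.t i) (π₁.t (i + 1)) • DG (y (π₁.t i)) (G (y (π₁.t i)))))
            + (∑ i ∈ Finset.range π₂.n, Sg.S (t - (τ + π₂.t i))
              ((RP.X (τ + π₂.t (i + 1)) - RP.X (τ + π₂.t i)) • G (y (τ + π₂.t i))
                + RP.X2 (τ + π₂.t i) (τ + π₂.t (i + 1)) •
                    DG (y (τ + π₂.t i)) (G (y (τ + π₂.t i)))))
            + (Sg.S (t - u) ((RP.X w - RP.X u) • G (y u)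
                + RP.X2 u w • DG (y u) (G (y u)))
              - Sg.S (t - u) ((RP.X τ - RP.X u) • G (y u)
                + RP.X2 u τ • DG (y u) (G (y u)))
              - Sg.S (t - τ) ((RP.X w - RP.X τ) • G (y τ)
                + RP.X2 τ w • DG (y τ) (G (y τ)))) := by
        simpa [convRiemannSum] using hsum
      have hA : (∑ i ∈ Finset.range π₁.n, Sg.S (t - π₁.t i)
            ((RP.X (π₁.t (i + 1)) - RP.X (π₁.t i)) • G (y (π₁.t i))
              + RP.X2 (π₁.t i) (π₁.t (i + 1)) • DG (y (π₁.t i)) (G (y (π₁.t i)))))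
          = Sg.S (t - τ) (convRiemannSum 𝓑 Sg RP.X RP.X2 (fun s => G (y₁ s))
              (fun s => DG (y₁ s) (G (y₁ s))) π₁) := by
        have hterm1 : ∀ i ∈ Finset.range π₁.n, Sg.S (t - π₁.t i)
            ((RP.X (π₁.t (i + 1)) - RP.X (π₁.t i)) • G (y (π₁.t i))
              + RP.X2 (π₁.t i) (π₁.t (i + 1)) • DG (y (π₁.t i)) (G (y (π₁.t i))))
            = Sg.S (t - τ) (Sg.S (τ - π₁.t i)
              ((RP.X (π₁.t (i + 1)) - RP.X (π₁.t i)) • G (y₁ (π₁.t i))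
                + RP.X2 (π₁.t i) (π₁.t (i + 1)) • DG (y₁ (π₁.t i)) (G (y₁ (π₁.t i))))) := by
          intro i hi
          have hi' := Finset.mem_range.mp hi
          have hiτ : π₁.t i ≤ τ := (π₁.t_mem hi'.le).2
          rw [hy_left _ hiτ,
            show t - π₁.t i = (t - τ) + (τ - π₁.t i) from by ring,
            Sg.S_comp (t - τ) (τ - π₁.t i) ht'0.le (by linarith) _]
        rw [Finset.sum_congr rfl hterm1, convRiemannSum]
        exact (map_sum (Sg.S (t - τ)) _ (Finset.range π₁.n)).symm
      have hB : (∑ i ∈ Finset.range π₂.n, Sg.S (t - (τ + π₂.t i))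
            ((RP.X (τ + π₂.t (i + 1)) - RP.X (τ + π₂.t i)) • G (y (τ + π₂.t i))
              + RP.X2 (τ + π₂.t i) (τ + π₂.t (i + 1)) •
                  DG (y (τ + π₂.t i)) (G (y (τ + π₂.t i)))))
          = convRiemannSum 𝓑 Sg (fun v => RP.X (τ + v) - RP.X τ)
              (fun s t => RP.X2 (τ + s) (τ + t)) (fun s => G (y₂ s))
              (fun s => DG (y₂ s) (G (y₂ s))) π₂ := by
        unfold convRiemannSum
        dsimp only
        apply Finset.sum_congr rfl
        intro i hi
        have hi' := Finset.mem_range.mp hi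
        have h0i : 0 ≤ π₂.t i := (π₂.t_mem hi'.le).1
        rw [hy_right _ h0i,
          show t - (τ + π₂.t i) = t - τ - π₂.t i from by ring,
          show RP.X (τ + π₂.t (i + 1)) - RP.X (τ + π₂.t i)
            = (RP.X (τ + π₂.t (i + 1)) - RP.X τ) - (RP.X (τ + π₂.t i) - RP.X τ)
            from by ring]
      rw [hsum', hA, hB]
      -- memberships
      have hmemC₁ : 𝓑.Mem (γ - 2 * α) (convRiemannSum 𝓑 Sg RP.X RP.X2
          (fun s => G (y₁ s)) (fun s => DG (y₁ s) (G (y₁ s))) π₁) := by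
        apply 𝓑.mem_finsum
        intro i hi
        have hi' := Finset.mem_range.mp hi
        have h0i : 0 ≤ π₁.t i := (π₁.t_mem hi'.le).1
        have hiτ : π₁.t i ≤ τ := (π₁.t_mem hi'.le).2
        dsimp only
        apply Sg.S_mem _ _ _ (by linarith)
        rw [← hy_left _ hiτ]
        exact 𝓑.mem_add _ _ _ (𝓑.mem_smul _ _ _ (hGmem2 _ h0i (by linarith)))
          (𝓑.mem_smul _ _ _ (hzmem _ h0i (by linarith)))
      have hmemC₂ : 𝓑.Mem (γ - 2 * α) (convRiemannSum 𝓑 Sg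
          (fun v => RP.X (τ + v) - RP.X τ) (fun s t => RP.X2 (τ + s) (τ + t))
          (fun s => G (y₂ s)) (fun s => DG (y₂ s) (G (y₂ s))) π₂) := by
        apply 𝓑.mem_finsum
        intro i hi
        have hi' := Finset.mem_range.mp hi
        have h0i : 0 ≤ π₂.t i := (π₂.t_mem hi'.le).1
        have hiτ' : π₂.t i ≤ t - τ := (π₂.t_mem hi'.le).2
        dsimp only
        apply Sg.S_mem _ _ _ (by linarith)
        rw [← hy_right _ h0i]
        exact 𝓑.mem_add _ _ _
          (𝓑.mem_smul _ _ _ (hGmem2 _ (by linarith) (by linarith)))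
          (𝓑.mem_smul _ _ _ (hzmem _ (by linarith) (by linarith)))
      have htuw := hterm u w hu0 (by linarith) huτ hwt hwu
      have htuτ := hterm u τ hu0 huτ huτ hτt.le (by linarith)
      have htτw := hterm τ w hτ.le hτw le_rfl hwt (by linarith)
      have hrearr : Sg.S (t - τ) (convRiemannSum 𝓑 Sg RP.X RP.X2 (fun s => G (y₁ s))
              (fun s => DG (y₁ s) (G (y₁ s))) π₁)
            + convRiemannSum 𝓑 Sg (fun v => RP.X (τ + v) - RP.X τ)
                (fun s t => RP.X2 (τ + s) (τ + t)) (fun s => G (y₂ s))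
                (fun s => DG (y₂ s) (G (y₂ s))) π₂
            + (Sg.S (t - u) ((RP.X w - RP.X u) • G (y u)
                + RP.X2 u w • DG (y u) (G (y u)))
              - Sg.S (t - u) ((RP.X τ - RP.X u) • G (y u)
                + RP.X2 u τ • DG (y u) (G (y u)))
              - Sg.S (t - τ) ((RP.X w - RP.X τ) • G (y τ)
                + RP.X2 τ w • DG (y τ) (G (y τ))))
            - (Sg.S (t - τ) Z₁ + Z₂)
          = Sg.S (t - τ) (convRiemannSum 𝓑 Sg RP.X RP.X2 (fun s => G (y₁ s))
              (fun s => DG (y₁ s) (G (y₁ s))) π₁ - Z₁)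
            + (convRiemannSum 𝓑 Sg (fun v => RP.X (τ + v) - RP.X τ)
                (fun s t => RP.X2 (τ + s) (τ + t)) (fun s => G (y₂ s))
                (fun s => DG (y₂ s) (G (y₂ s))) π₂ - Z₂)
            + (Sg.S (t - u) ((RP.X w - RP.X u) • G (y u)
                + RP.X2 u w • DG (y u) (G (y u)))
              - Sg.S (t - u) ((RP.X τ - RP.X u) • G (y u)
                + RP.X2 u τ • DG (y u) (G (y u)))
              - Sg.S (t - τ) ((RP.X w - RP.X τ) • G (y τ)
                + RP.X2 τ w • DG (y τ) (G (y τ)))) := by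
        rw [map_sub]
        abel
      rw [hrearr]
      have hmm1 : 𝓑.Mem (γ - 2 * α) (Sg.S (t - τ) (convRiemannSum 𝓑 Sg RP.X RP.X2
          (fun s => G (y₁ s)) (fun s => DG (y₁ s) (G (y₁ s))) π₁ - Z₁)) :=
        Sg.S_mem _ _ _ ht'0.le (𝓑.mem_sub _ _ _ hmemC₁ hZ₁.1)
      have hmm2 := 𝓑.mem_sub _ _ _ hmemC₂ hZ₂.1
      have hmm3 := 𝓑.mem_sub _ _ _ (𝓑.mem_sub _ _ _ htuw.1 htuτ.1) htτw.1
      refine le_trans (𝓑.N_add3 _ _ _ _ hmm1 hmm2 hmm3) ?_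
      have hb1 : 𝓑.N (γ - 2 * α) (Sg.S (t - τ) (convRiemannSum 𝓑 Sg RP.X RP.X2
          (fun s => G (y₁ s)) (fun s => DG (y₁ s) (G (y₁ s))) π₁ - Z₁)) ≤ ε / 3 := by
        refine (hCS2 (t - τ) _ ht'0.le (by linarith)
          (𝓑.mem_sub _ _ _ hmemC₁ hZ₁.1)).trans ?_
        have h5 := hp₁ π₁ (lt_of_le_of_lt hm₁ hπ1)
        calc CS2 * 𝓑.N (γ - 2 * α) (convRiemannSum 𝓑 Sg RP.X RP.X2
              (fun s => G (y₁ s)) (fun s => DG (y₁ s) (G (y₁ s))) π₁ - Z₁)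
            ≤ CS2 * (ε / (3 * CS2)) := mul_le_mul_of_nonneg_left h5 hCS20.le
          _ = ε / 3 := by field_simp
      have hb2 := hp₂ π₂ (lt_of_le_of_lt hm₂ hπ2)
      have hb3 : 𝓑.N (γ - 2 * α) (Sg.S (t - u) ((RP.X w - RP.X u) • G (y u)
            + RP.X2 u w • DG (y u) (G (y u)))
          - Sg.S (t - u) ((RP.X τ - RP.X u) • G (y u)
            + RP.X2 u τ • DG (y u) (G (y u)))
          - Sg.S (t - τ) ((RP.X w - RP.X τ) • G (y τ)
            + RP.X2 τ w • DG (y τ) (G (y τ)))) ≤ ε / 3 := by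
        refine le_trans (𝓑.N_sub3 _ _ _ _ htuw.1 htuτ.1 htτw.1) ?_
        have h9 : CS2 * (CX * π.mesh ^ α * (Cem * Mg)
              + CX2 * ((τ + τ') ^ α * π.mesh ^ α) * (Cem2 * (CDG * Mg)))
              + CS2 * (CX * π.mesh ^ α * (Cem * Mg)
              + CX2 * ((τ + τ') ^ α * π.mesh ^ α) * (Cem2 * (CDG * Mg)))
              + CS2 * (CX * π.mesh ^ α * (Cem * Mg)
              + CX2 * ((τ + τ') ^ α * π.mesh ^ α) * (Cem2 * (CDG * Mg)))
            = KZ * π.mesh ^ α := by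
          rw [hKZdef]; ring
        have h10 : KZ * π.mesh ^ α ≤ ε / 3 := by
          calc KZ * π.mesh ^ α ≤ KZ * (ε / (3 * (KZ + 1))) :=
                mul_le_mul_of_nonneg_left hmeshα.le hKZ0
            _ ≤ (KZ + 1) * (ε / (3 * (KZ + 1))) := by
                apply mul_le_mul_of_nonneg_right _ hε'0.le
                linarith
            _ = ε / 3 := by field_simp
        linarith [htuw.2, htuτ.2, htτw.2]
      linarith
    · show y t = Sg.S t y₀ + (Sg.S (t - τ) D₁ + D₂) + (Sg.S (t - τ) Z₁ + Z₂)
      rw [hy_right' t hτt, heq₂, heq₁, map_add, map_add,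
        ← Sg.S_comp (t - τ) τ ht'0.le hτ.le y₀, show t - τ + τ = t from by ring]
      abel
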